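/- arXiv:2211.00289 — 6 statements merged into one kernel-verified Lean document; each statement's English description precedes it below -/
import Mathlib

section
/- Let 1 ≤ ℓ ≤ k ≤ n be integers and let ν be a strongly Rayleigh function on the ℓ-element subsets of {1,…,n}. Define μ on the k-element subsets of {1,…,n} by μ(S) = Σ_{W⊆S, |W|=ℓ} ν(W). Then μ is strongly Rayleigh. -/
open Finset

/-- A function `ν` assigning a nonnegative real to each `ℓ`-element subset of `{1,…,n}`
is strongly Rayleigh if its generating polynomial
`g_ν(z) = Σ_{|S|=ℓ} ν(S)·Π_{i∈S} z_i` has no complex zero with all coordinates in the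
open upper half plane. -/
def StronglyRayleigh (n ℓ : ℕ) (ν : Finset (Fin n) → ℝ) : Prop :=
  (∀ S : Finset (Fin n), S.card = ℓ → 0 ≤ ν S) ∧
  ∀ z : Fin n → ℂ, (∀ i, 0 < (z i).im) →
    (∑ S ∈ Finset.powersetCard ℓ (Finset.univ : Finset (Fin n)),
      (ν S : ℂ) * ∏ i ∈ S, z i) ≠ 0

open Polynomial
private lemma msum_neg : ∀ (m : Multiset ℝ), m ≠ 0 → (∀ x ∈ m, x < 0) → m.sum < 0 := by
  intro m
  induction m using Multiset.induction with
  | empty => simp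
  | cons a s ih =>
    intro _ h
    rw [Multiset.sum_cons]
    rcases eq_or_ne s 0 with rfl | hs
    · simpa using h a (by simp)
    · exact add_neg (h a (by simp)) (ih hs fun x hx => h x (by simp [hx]))

private lemma aux_prod_deriv (t : ℂ) : ∀ (m : Multiset ℂ), (∀ r ∈ m, t - r ≠ 0) →
    (Polynomial.derivative (m.map fun a => Polynomial.X - Polynomial.C a).prod).eval t
      = (m.map fun a => t - a).prod * (m.map fun a => (t - a)⁻¹).sum := by
  intro m
  induction m using Multiset.induction with
  | empty => simp
  | cons a s ih =>
    intro h
    have ha : t - a ≠ 0 := h a (by simp)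
    have hs : ∀ r ∈ s, t - r ≠ 0 := fun r hr => h r (by simp [hr])
    rw [Multiset.map_cons, Multiset.prod_cons, derivative_mul, eval_add, eval_mul, eval_mul,
      Multiset.map_cons, Multiset.map_cons, Multiset.prod_cons, Multiset.sum_cons, ih hs]
    simp only [derivative_sub, derivative_X, derivative_C, sub_zero, eval_one, eval_sub,
      eval_X, eval_C, eval_multiset_prod, Multiset.map_map, Function.comp]
    field_simp

private lemma deriv_eval_ne_zero (Q : Polynomial ℂ) (hd : Q.natDegree ≠ 0)
    (h : ∀ t : ℂ, 0 ≤ t.im → Q.eval t ≠ 0) {t : ℂ} (ht : 0 ≤ t.im) :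
    Q.derivative.eval t ≠ 0 := by
  have hQ : Q ≠ 0 := fun h0 => h Complex.I (by simp) (by simp [h0])
  have hcard : Multiset.card Q.roots = Q.natDegree :=
    Polynomial.splits_iff_card_roots.mp (IsAlgClosed.splits Q)
  have hfac := Polynomial.C_leadingCoeff_mul_prod_multiset_X_sub_C (p := Q) hcard
  have hroots : ∀ r ∈ Q.roots, r.im < 0 := by
    intro r hr
    by_contra hge
    exact h r (le_of_not_gt hge) ((Polynomial.mem_roots hQ).mp hr)
  have hne : ∀ r ∈ Q.roots, t - r ≠ 0 := by
    intro r hr h0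
    have : (t - r).im = 0 := by rw [h0]; simp
    simp only [Complex.sub_im] at this
    nlinarith [hroots r hr]
  have him : ∀ r ∈ Q.roots, ((t - r)⁻¹).im < 0 := by
    intro r hr
    rw [Complex.inv_im]
    have h1 : 0 < (t - r).im := by
      simp only [Complex.sub_im]; nlinarith [hroots r hr]
    have h2 : 0 < Complex.normSq (t - r) := by
      rw [Complex.normSq_pos]; exact hne r hr
    exact div_neg_of_neg_of_pos (by linarith) h2
  rw [← hfac, derivative_C_mul, eval_mul, eval_C,
    aux_prod_deriv t Q.roots hne]
  refine mul_ne_zero (Polynomial.leadingCoeff_ne_zero.mpr hQ) (mul_ne_zero ?_ ?_)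
  · refine Multiset.prod_ne_zero ?_
    intro h0
    rcases Multiset.mem_map.mp h0 with ⟨r, hr, hr0⟩
    exact hne r hr hr0
  · intro h0
    have : ((Q.roots.map fun a => (t - a)⁻¹).sum).im < 0 := by
      rw [← Complex.coe_imAddGroupHom, map_multiset_sum, Multiset.map_map]
      refine msum_neg _ ?_ ?_
      · simp only [ne_eq, Multiset.map_eq_zero, Multiset.map_eq_zero]
        intro h00
        rw [h00] at hcard
        simp at hcard
        exact hd hcard.symm
      · intro x hx
        rcases Multiset.mem_map.mp hx with ⟨r, hr, rfl⟩
        exact him r hr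
    rw [h0] at this
    simp at this

private lemma iter_deriv_ne_zero : ∀ (m : ℕ) (Q : Polynomial ℂ), m ≤ Q.natDegree →
    (∀ t : ℂ, 0 ≤ t.im → Q.eval t ≠ 0) →
    ∀ t : ℂ, 0 ≤ t.im → (Polynomial.derivative^[m] Q).eval t ≠ 0 := by
  intro m
  induction m with
  | zero => intro Q _ h t ht; simpa using h t ht
  | succ m ih =>
    intro Q hm h t ht
    have hQ : Q ≠ 0 := fun h0 => h Complex.I (by simp) (by simp [h0])
    have hd : Q.natDegree ≠ 0 := by omega
    have h' : ∀ t : ℂ, 0 ≤ t.im → Q.derivative.eval t ≠ 0 :=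
      fun s hs => deriv_eval_ne_zero Q hd h hs
    have hdeg : m ≤ Q.derivative.natDegree := by
      have hc : Q.derivative.coeff (Q.natDegree - 1) ≠ 0 := by
        rw [Polynomial.coeff_derivative]
        have : Q.natDegree - 1 + 1 = Q.natDegree := by omega
        rw [this]
        refine mul_ne_zero (Polynomial.leadingCoeff_ne_zero.mpr hQ) ?_
        have : ((Q.natDegree - 1 : ℕ) : ℂ) + 1 = ((Q.natDegree : ℕ) : ℂ) := by
          push_cast [Nat.cast_sub (by omega : 1 ≤ Q.natDegree)]; ring
        rw [this]
        exact_mod_cast Nat.cast_ne_zero.mpr hd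
      have := Polynomial.le_natDegree_of_ne_zero hc
      omega
    rw [Function.iterate_succ_apply]
    exact ih Q.derivative hdeg h' t ht

private lemma ne_zero_of_im_pos {ζ : ℂ} (h : 0 < ζ.im) : ζ ≠ 0 := by
  intro h0; rw [h0] at h; simp at h

private lemma recip_ne_zero (n ℓ : ℕ) (ν : Finset (Fin n) → ℝ) (hν : StronglyRayleigh n ℓ ν)
    (v : Fin n → ℂ) (hv : ∀ i, 0 < (v i).im) :
    (∑ S ∈ Finset.powersetCard ℓ (Finset.univ : Finset (Fin n)),
      (ν S : ℂ) * ∏ i ∈ Sᶜ, v i) ≠ 0 := by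
  set u : Fin n → ℂ := fun i => ((starRingEnd ℂ) (v i))⁻¹ with hu
  have hvne : ∀ i, v i ≠ 0 := fun i => ne_zero_of_im_pos (hv i)
  have hui : ∀ i, 0 < (u i).im := by
    intro i
    rw [hu]
    simp only [Complex.inv_im, Complex.conj_im, neg_neg]
    have h2 : 0 < Complex.normSq ((starRingEnd ℂ) (v i)) := by
      rw [Complex.normSq_pos]
      simpa using hvne i
    have := hv i
    positivity
  have hG := hν.2 u hui
  have key : (∑ S ∈ Finset.powersetCard ℓ (Finset.univ : Finset (Fin n)),
      (ν S : ℂ) * ∏ i ∈ Sᶜ, v i)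
      = (∏ i, v i) * (starRingEnd ℂ)
        (∑ S ∈ Finset.powersetCard ℓ (Finset.univ : Finset (Fin n)),
          (ν S : ℂ) * ∏ i ∈ S, u i) := by
    rw [map_sum, Finset.mul_sum]
    refine Finset.sum_congr rfl ?_
    intro S _
    rw [map_mul, Complex.conj_ofReal, map_prod]
    have hcu : ∀ i, (starRingEnd ℂ) (u i) = (v i)⁻¹ := by
      intro i; rw [hu]; simp [map_inv₀]
    simp only [hcu]
    rw [Finset.prod_inv_distrib]
    rw [← Finset.prod_mul_prod_compl S (fun i => v i)]
    have hp : (∏ i ∈ S, v i) ≠ 0 := Finset.prod_ne_zero_iff.mpr fun i _ => hvne i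
    field_simp
  rw [key]
  refine mul_ne_zero (Finset.prod_ne_zero_iff.mpr fun i _ => hvne i) ?_
  rw [map_ne_zero_iff _ (RingHom.injective _)]
  exact hG

private lemma coeff_reindex (n ℓ k : ℕ) (hkn : k ≤ n) (ν : Finset (Fin n) → ℝ) (w : Fin n → ℂ) :
    ∑ S ∈ Finset.powersetCard ℓ (Finset.univ : Finset (Fin n)), (ν S : ℂ) *
      ∑ B ∈ Finset.powersetCard (n - k) Sᶜ, ∏ i ∈ B, w i
    = ∑ T ∈ Finset.powersetCard k (Finset.univ : Finset (Fin n)),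
        (∑ W ∈ Finset.powersetCard ℓ T, (ν W : ℂ)) * ∏ i ∈ Tᶜ, w i := by
  simp only [Finset.mul_sum, Finset.sum_mul]
  rw [Finset.sum_sigma', Finset.sum_sigma']
  refine Finset.sum_bij' (fun p _ => ⟨p.2ᶜ, p.1⟩) (fun q _ => ⟨q.2, q.1ᶜ⟩) ?_ ?_ ?_ ?_ ?_
  · rintro ⟨S, B⟩ hp
    simp only [Finset.mem_sigma, Finset.mem_powersetCard] at hp ⊢
    obtain ⟨⟨_, hScard⟩, hBsub, hBcard⟩ := hp
    refine ⟨⟨Finset.subset_univ _, ?_⟩, ?_, hScard⟩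
    · rw [Finset.card_compl, hBcard, Fintype.card_fin, Nat.sub_sub_self hkn]
    · rw [Finset.subset_compl_comm] at hBsub
      exact hBsub
  · rintro ⟨T, W⟩ hq
    simp only [Finset.mem_sigma, Finset.mem_powersetCard] at hq ⊢
    obtain ⟨⟨_, hTcard⟩, hWsub, hWcard⟩ := hq
    refine ⟨⟨Finset.subset_univ _, hWcard⟩, ?_, ?_⟩
    · rw [← Finset.subset_compl_comm, compl_compl]
      exact hWsub
    · rw [Finset.card_compl, hTcard, Fintype.card_fin]
  · rintro ⟨S, B⟩ _; simp
  · rintro ⟨T, W⟩ _; simp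
  · rintro ⟨S, B⟩ _; simp

set_option linter.unusedVariables false in
/-- if `ν` is strongly Rayleigh on `ℓ`-subsets and `1 ≤ ℓ ≤ k ≤ n`, then
`μ(S) = Σ_{W ⊆ S, |W| = ℓ} ν(W)` is strongly Rayleigh on `k`-subsets. -/
theorem stmt0 (n ℓ k : ℕ) (hℓ1 : 1 ≤ ℓ) (hℓk : ℓ ≤ k) (hkn : k ≤ n)
    (ν : Finset (Fin n) → ℝ) (hν : StronglyRayleigh n ℓ ν) :
    StronglyRayleigh n k (fun S => ∑ W ∈ Finset.powersetCard ℓ S, ν W) := by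
  constructor
  · intro S _
    exact Finset.sum_nonneg fun W hW => hν.1 W (Finset.mem_powersetCard.mp hW).2
  intro z hz
  set w : Fin n → ℂ := fun i => -(z i)⁻¹ with hw
  have hwim : ∀ i, 0 < (w i).im := by
    intro i
    have h1 := hz i
    have h2 : 0 < Complex.normSq (z i) := Complex.normSq_pos.mpr (ne_zero_of_im_pos h1)
    rw [hw]
    simp only [Complex.neg_im, Complex.inv_im, neg_div, neg_neg]
    positivity
  have hwne : ∀ i, w i ≠ 0 := fun i => ne_zero_of_im_pos (hwim i)
  have hzw : ∀ i, z i = -(w i)⁻¹ := by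
    intro i; rw [hw]; simp only [inv_neg, inv_inv, neg_neg]
  set Q : Polynomial ℂ := ∑ S ∈ Finset.powersetCard ℓ (Finset.univ : Finset (Fin n)),
      Polynomial.C ((ν S : ℝ) : ℂ) * ∏ i ∈ Sᶜ, (Polynomial.X + Polynomial.C (w i)) with hQdef
  have hQeval : ∀ t : ℂ, 0 ≤ t.im → Q.eval t ≠ 0 := by
    intro t ht
    have he : Q.eval t = ∑ S ∈ Finset.powersetCard ℓ (Finset.univ : Finset (Fin n)),
        (ν S : ℂ) * ∏ i ∈ Sᶜ, (t + w i) := by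
      rw [hQdef]
      simp [Polynomial.eval_finset_sum, Polynomial.eval_prod]
    rw [he]
    refine recip_ne_zero n ℓ ν hν (fun i => t + w i) ?_
    intro i
    have := hwim i
    simp only [Complex.add_im]
    linarith
  have hsum_pos : (0:ℝ) < ∑ S ∈ Finset.powersetCard ℓ (Finset.univ : Finset (Fin n)), ν S := by
    have hex : ∃ S ∈ Finset.powersetCard ℓ (Finset.univ : Finset (Fin n)), 0 < ν S := by
      by_contra hal
      push_neg at hal
      apply hν.2 (fun _ => Complex.I) (by simp)
      refine Finset.sum_eq_zero fun S hS => ?_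
      have h0 : ν S = 0 :=
        le_antisymm (hal S hS) (hν.1 S (Finset.mem_powersetCard.mp hS).2)
      rw [h0]
      simp
    exact Finset.sum_pos' (fun S hS => hν.1 S (Finset.mem_powersetCard.mp hS).2) hex
  have hcompl_card : ∀ S ∈ Finset.powersetCard ℓ (Finset.univ : Finset (Fin n)),
      Sᶜ.card = n - ℓ := by
    intro S hS
    rw [Finset.card_compl, (Finset.mem_powersetCard.mp hS).2, Fintype.card_fin]
  have hdegQ : k - ℓ ≤ Q.natDegree := by
    have hcoefftop : Q.coeff (n - ℓ)
        = ((∑ S ∈ Finset.powersetCard ℓ (Finset.univ : Finset (Fin n)), ν S : ℝ) : ℂ) := by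
      rw [hQdef, Polynomial.finset_sum_coeff]
      push_cast
      refine Finset.sum_congr rfl fun S hS => ?_
      rw [Polynomial.coeff_C_mul, ← hcompl_card S hS,
        Finset.prod_X_add_C_coeff _ _ (le_refl _)]
      simp
    have hne : Q.coeff (n - ℓ) ≠ 0 := by
      rw [hcoefftop]
      exact_mod_cast ne_of_gt hsum_pos
    have := Polynomial.le_natDegree_of_ne_zero hne
    omega
  have hiter := iter_deriv_ne_zero (k - ℓ) Q hdegQ hQeval 0 (by simp)
  have hc : Q.coeff (k - ℓ) ≠ 0 := by
    intro h0
    apply hiter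
    rw [← Polynomial.coeff_zero_eq_eval_zero, Polynomial.coeff_iterate_derivative, zero_add, h0]
    simp
  have hcoeffm : Q.coeff (k - ℓ)
      = ∑ T ∈ Finset.powersetCard k (Finset.univ : Finset (Fin n)),
          (∑ W ∈ Finset.powersetCard ℓ T, (ν W : ℂ)) * ∏ i ∈ Tᶜ, w i := by
    rw [hQdef, Polynomial.finset_sum_coeff, ← coeff_reindex n ℓ k hkn ν w]
    refine Finset.sum_congr rfl fun S hS => ?_
    rw [Polynomial.coeff_C_mul,
      Finset.prod_X_add_C_coeff _ _ (by rw [hcompl_card S hS]; omega : k - ℓ ≤ Sᶜ.card),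
      hcompl_card S hS]
    have h3 : n - ℓ - (k - ℓ) = n - k := by omega
    rw [h3]
  intro h0
  apply hc
  rw [hcoeffm]
  have hterm : ∀ T ∈ Finset.powersetCard k (Finset.univ : Finset (Fin n)),
      (∑ W ∈ Finset.powersetCard ℓ T, (ν W : ℂ)) * ∏ i ∈ Tᶜ, w i
      = ((-1)^k * ∏ i, w i) *
          ((∑ W ∈ Finset.powersetCard ℓ T, (ν W : ℂ)) * ∏ i ∈ T, z i) := by
    intro T hT
    have hTcard := (Finset.mem_powersetCard.mp hT).2
    have hpT : (∏ i ∈ T, w i) ≠ 0 := Finset.prod_ne_zero_iff.mpr fun i _ => hwne i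
    have h1 : ∏ i ∈ T, z i = (-1)^k * (∏ i ∈ T, w i)⁻¹ := by
      calc ∏ i ∈ T, z i = ∏ i ∈ T, (-(w i)⁻¹) :=
            Finset.prod_congr rfl fun i _ => hzw i
        _ = ∏ i ∈ T, ((-1) * (w i)⁻¹) :=
            Finset.prod_congr rfl fun i _ => (neg_one_mul _).symm
        _ = (-1)^k * (∏ i ∈ T, w i)⁻¹ := by
            rw [Finset.prod_mul_distrib, Finset.prod_const, hTcard,
              Finset.prod_inv_distrib]
    have h2 : ((-1:ℂ))^k * (-1:ℂ)^k = 1 := by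
      rw [← mul_pow]; norm_num
    set c : ℂ := ∑ W ∈ Finset.powersetCard ℓ T, (ν W : ℂ)
    calc c * ∏ i ∈ Tᶜ, w i
        = (((-1:ℂ))^k * (-1:ℂ)^k) * (c * ((∏ i ∈ T, w i) * (∏ i ∈ T, w i)⁻¹
            * ∏ i ∈ Tᶜ, w i)) := by
          rw [h2, mul_inv_cancel₀ hpT, one_mul, one_mul]
      _ = ((-1)^k * ((∏ i ∈ T, w i) * ∏ i ∈ Tᶜ, w i)) *
            (c * ((-1)^k * (∏ i ∈ T, w i)⁻¹)) := by ring
      _ = ((-1)^k * ∏ i, w i) * (c * ∏ i ∈ T, z i) := by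
          rw [Finset.prod_mul_prod_compl, h1]
  rw [Finset.sum_congr rfl hterm, ← Finset.mul_sum]
  have h0' : (∑ T ∈ Finset.powersetCard k (Finset.univ : Finset (Fin n)),
      (∑ W ∈ Finset.powersetCard ℓ T, (ν W : ℂ)) * ∏ i ∈ T, z i) = 0 := by
    rw [← h0]
    refine Finset.sum_congr rfl fun T _ => ?_
    push_cast
    ring
  rw [h0', mul_zero]
end

section
/- Let ν be a strongly Rayleigh function on the ℓ-element subsets of {1,…,n}. Then for every ε > 0 there exists a strongly Rayleigh function ν̃ on the ℓ-element subsets of {1,…,n} such that ν̃(S) > 0 for every ℓ-element set S and |ν(S) − ν̃(S)| ≤ ε for every ℓ-element set S. -/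
/-!
Take `ν̃(T) = ∑_S ν(S) θ^|S \ T|` for a small `θ ∈ (0, 1)`. Since `|S \ T| ≥ 1` for `S ≠ T`,
`|ν̃(T) - ν(T)| ≤ θ ∑_S ν(S)`, and `ν̃` has full support as soon as `ν ≠ 0`.

The generating polynomial of `ν̃` is the coefficient of `u^(n-ℓ)` in
`Q(u, z) = ∑_S ν(S) ∏_{i ∈ S} (θu + z_i) ∏_{i ∉ S} (u + z_i) = ∏_i (u + z_i) · g_ν(r)`, where
`r_i = (θu + z_i)/(u + z_i)`. For `Im u ≥ 0` a single factor `c(u)` rotates every `r_i` into the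
upper half-plane, so for fixed `z` in the upper half-plane `Q(·, z)` has no zeros in the closed
upper half-plane. By Gauss–Lucas neither has any of its derivatives, and evaluating the
`(n-ℓ)`-th derivative at `0` shows that the coefficient of `u^(n-ℓ)` does not vanish.
-/

open Finset

open Polynomial ComplexConjugate

namespace Polynomial

theorem coeff_prod_C_mul_X_add_C {R ι : Type*} [CommRing R] [Fintype ι]
    [DecidableEq ι] (a b : ι → R) {k : ℕ} (hk : k ≤ Fintype.card ι) :
    (∏ i, (C (a i) * X + C (b i))).coeff (Fintype.card ι - k) =
      ∑ W ∈ powersetCard k univ, (∏ i ∈ Wᶜ, a i) * ∏ i ∈ W, b i := by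
  have hexp : ∏ i, (C (a i) * X + C (b i)) =
      ∑ W ∈ univ.powerset, C ((∏ i ∈ Wᶜ, a i) * ∏ i ∈ W, b i) * X ^ Wᶜ.card := by
    simp_rw [add_comm _ (C (b _)), prod_add, ← compl_eq_univ_sdiff, prod_mul_distrib,
      prod_const, map_mul, map_prod]
    exact sum_congr rfl fun W _ => by ring
  rw [hexp, finsetSum_coeff, powersetCard_eq_filter, sum_filter]
  refine sum_congr rfl fun W _ => ?_
  have hW : W.card ≤ Fintype.card ι := card_le_univ W
  rw [coeff_C_mul_X_pow, card_compl]
  by_cases h : W.card = k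
  · simp [h]
  · rw [if_neg (by omega), if_neg h]

theorem rootSet_iterate_derivative_subset {K : Set ℂ} (hK : Convex ℝ K) {P : ℂ[X]}
    (hP : P.rootSet ℂ ⊆ K) (k : ℕ) : (derivative^[k] P).rootSet ℂ ⊆ K := by
  induction k with
  | zero => exact hP
  | succ k ih =>
    rw [Function.iterate_succ_apply']
    rcases le_or_gt (derivative^[k] P).degree 0 with h | h
    · rw [eq_C_of_degree_le_zero h, derivative_C, rootSet_zero]
      exact Set.empty_subset K
    · exact (rootSet_derivative_subset_convexHull_rootSet h).trans (convexHull_min ih hK)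

theorem coeff_ne_zero_of_forall_im_nonneg {P : ℂ[X]}
    (hP : ∀ u : ℂ, 0 ≤ u.im → P.eval u ≠ 0) {k : ℕ} (hk : k ≤ P.natDegree) :
    P.coeff k ≠ 0 := by
  have hP0 : P ≠ 0 := fun h => hP 0 le_rfl (by simp [h])
  have hroots : (derivative^[k] P).rootSet ℂ ⊆ {u | u.im < 0} :=
    rootSet_iterate_derivative_subset (convex_halfSpace_lt Complex.imLm.isLinear 0)
      (fun u hu => lt_of_not_ge fun h => hP u h (by simpa using (mem_rootSet.1 hu).2)) k
  have hne : derivative^[k] P ≠ 0 := by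
    intro h
    have := coeff_iterate_derivative (k := k) P (P.natDegree - k)
    rw [h, Nat.sub_add_cancel hk, coeff_zero, eq_comm, nsmul_eq_mul, mul_eq_zero,
      Nat.cast_eq_zero, Nat.descFactorial_eq_zero_iff_lt] at this
    exact this.elim (absurd · (not_lt.2 hk)) (leadingCoeff_ne_zero.2 hP0)
  have h0 : (derivative^[k] P).eval 0 ≠ 0 := fun h =>
    (lt_irrefl 0 : ¬ (0 : ℂ).im < 0) (hroots (mem_rootSet.2 ⟨hne, by simpa using h⟩))
  rw [← coeff_zero_eq_eval_zero, coeff_iterate_derivative, zero_add, nsmul_eq_mul] at h0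
  exact right_ne_zero_of_mul h0

end Polynomial

/-- For `u ≠ 0` the multiplier is `u + θ ū`: after clearing the denominator `|u + z|²`,
the imaginary part becomes `(1 - θ) ((1 + θ) |u|² Im z + |z|² Im u + θ |u|² Im u)`. -/
theorem exists_forall_im_mul_div_pos {θ : ℝ} (hθ0 : 0 ≤ θ) (hθ1 : θ < 1) {u : ℂ}
    (hu : 0 ≤ u.im) : ∃ c : ℂ, ∀ z : ℂ, 0 < z.im → 0 < (c * ((θ * u + z) / (u + z))).im := by
  rcases eq_or_ne u 0 with rfl | hu0
  · refine ⟨Complex.I, fun z hz => ?_⟩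
    have hz0 : z ≠ 0 := fun h => by simp [h] at hz
    simp [hz0]
  refine ⟨u + θ * conj u, fun z hz => ?_⟩
  have hden : 0 < Complex.normSq (u + z) :=
    Complex.normSq_pos.2 fun h => by
      have := congrArg Complex.im h
      simp only [Complex.add_im, Complex.zero_im] at this
      linarith
  have hu2 : 0 < u.re ^ 2 + u.im ^ 2 := by
    have := Complex.normSq_pos.2 hu0
    rwa [Complex.normSq_apply, ← sq, ← sq] at this
  rw [mul_div_assoc', Complex.div_im, ← sub_div]
  refine div_pos ?_ hden
  have key : ((u + θ * conj u) * (θ * u + z)).im * (u + z).re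
      - ((u + θ * conj u) * (θ * u + z)).re * (u + z).im
      = (1 - θ) * ((1 + θ) * z.im * (u.re ^ 2 + u.im ^ 2) + u.im * (z.re ^ 2 + z.im ^ 2)
        + θ * u.im * (u.re ^ 2 + u.im ^ 2)) := by
    simp only [Complex.mul_im, Complex.mul_re, Complex.add_im, Complex.add_re,
      Complex.ofReal_re, Complex.ofReal_im, Complex.conj_re, Complex.conj_im]
    ring
  rw [key]
  refine mul_pos (by linarith) (add_pos_of_pos_of_nonneg (add_pos_of_pos_of_nonneg ?_ ?_) ?_)
  · exact mul_pos (mul_pos (by linarith) hz) hu2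
  · positivity
  · positivity

def generatingFunction {n : ℕ} (ℓ : ℕ) (ν : Finset (Fin n) → ℝ) (z : Fin n → ℂ) : ℂ :=
  ∑ S ∈ powersetCard ℓ univ, (ν S : ℂ) * ∏ i ∈ S, z i

theorem generatingFunction_smul {n ℓ : ℕ} (ν : Finset (Fin n) → ℝ) (c : ℂ) (z : Fin n → ℂ) :
    generatingFunction ℓ ν (c • z) = c ^ ℓ * generatingFunction ℓ ν z := by
  rw [generatingFunction, generatingFunction, mul_sum]
  refine sum_congr rfl fun S hS => ?_
  rw [Pi.smul_def]
  simp only [smul_eq_mul, prod_mul_distrib, prod_const, (mem_powersetCard.1 hS).2]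
  ring

theorem generatingFunction_zero {n : ℕ} (ν : Finset (Fin n) → ℝ) (z : Fin n → ℂ) :
    generatingFunction 0 ν z = ν ∅ := by
  simp [generatingFunction]

theorem StronglyRayleigh.exists_pos {n ℓ : ℕ} {ν : Finset (Fin n) → ℝ}
    (hν : StronglyRayleigh n ℓ ν) : ∃ S : Finset (Fin n), S.card = ℓ ∧ 0 < ν S := by
  obtain ⟨S, hS, hνS⟩ :=
    exists_ne_zero_of_sum_ne_zero (hν.2 (fun _ => Complex.I) fun _ => by simp)
  have hcard := (mem_powersetCard.1 hS).2
  exact ⟨S, hcard, (hν.1 S hcard).lt_of_ne' fun h => hνS (by simp [h])⟩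

theorem StronglyRayleigh.card_le {n ℓ : ℕ} {ν : Finset (Fin n) → ℝ}
    (hν : StronglyRayleigh n ℓ ν) : ℓ ≤ n := by
  obtain ⟨S, hS, -⟩ := hν.exists_pos
  simpa [hS] using card_le_univ S

def smoothing {n : ℕ} (ℓ : ℕ) (θ : ℝ) (ν : Finset (Fin n) → ℝ) (T : Finset (Fin n)) : ℝ :=
  ∑ S ∈ powersetCard ℓ univ, ν S * θ ^ (S \ T).card

noncomputable def smoothingPoly {n : ℕ} (ℓ : ℕ) (θ : ℝ) (ν : Finset (Fin n) → ℝ)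
    (z : Fin n → ℂ) : ℂ[X] :=
  ∑ S ∈ powersetCard ℓ univ, C (ν S : ℂ) * ∏ i, (C (if i ∈ S then (θ : ℂ) else 1) * X + C (z i))

theorem coeff_smoothingPoly {n ℓ k : ℕ} (θ : ℝ) (ν : Finset (Fin n) → ℝ) (z : Fin n → ℂ)
    (hk : k ≤ n) :
    (smoothingPoly ℓ θ ν z).coeff (n - k) = generatingFunction k (smoothing ℓ θ ν) z := by
  have hcoeff := fun S : Finset (Fin n) =>
    coeff_prod_C_mul_X_add_C (fun i => if i ∈ S then (θ : ℂ) else 1) z (k := k) (by simpa using hk)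
  simp only [Fintype.card_fin, prod_ite_mem, prod_const] at hcoeff
  simp only [smoothingPoly, generatingFunction, smoothing, finsetSum_coeff, coeff_C_mul, hcoeff,
    mul_sum, Complex.ofReal_sum, Complex.ofReal_mul, Complex.ofReal_pow, sum_mul]
  rw [sum_comm]
  refine sum_congr rfl fun W _ => sum_congr rfl fun S _ => ?_
  rw [inter_comm, ← sdiff_eq_inter_compl, mul_assoc]

theorem eval_smoothingPoly {n ℓ : ℕ} (θ : ℝ) (ν : Finset (Fin n) → ℝ) {z : Fin n → ℂ} {u : ℂ}
    (hz : ∀ i, u + z i ≠ 0) :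
    (smoothingPoly ℓ θ ν z).eval u =
      (∏ i, (u + z i)) * generatingFunction ℓ ν (fun i => (θ * u + z i) / (u + z i)) := by
  simp only [smoothingPoly, generatingFunction, eval_finsetSum, eval_mul, eval_C, eval_prod,
    eval_add, eval_X, mul_sum]
  refine sum_congr rfl fun S _ => ?_
  have hfactor : ∀ i, (if i ∈ S then (θ : ℂ) else 1) * u + z i =
      (if i ∈ S then (θ * u + z i) / (u + z i) else 1) * (u + z i) := fun i => by
    split_ifs
    · rw [div_mul_cancel₀ _ (hz i)]
    · rw [one_mul, one_mul]
  rw [prod_congr rfl fun i _ => hfactor i, prod_mul_distrib, prod_ite_mem, univ_inter]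
  ring

namespace StronglyRayleigh

variable {n ℓ : ℕ} {ν : Finset (Fin n) → ℝ}

theorem eval_smoothingPoly_ne_zero (hν : StronglyRayleigh n ℓ ν) {θ : ℝ} (hθ0 : 0 ≤ θ)
    (hθ1 : θ < 1) {z : Fin n → ℂ} (hz : ∀ i, 0 < (z i).im) {u : ℂ} (hu : 0 ≤ u.im) :
    (smoothingPoly ℓ θ ν z).eval u ≠ 0 := by
  have hden : ∀ i, u + z i ≠ 0 := fun i h => by
    have := congrArg Complex.im h
    simp only [Complex.add_im, Complex.zero_im] at this
    linarith [hz i]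
  obtain ⟨c, hc⟩ := exists_forall_im_mul_div_pos hθ0 hθ1 hu
  have hgen : generatingFunction ℓ ν (c • fun i => (θ * u + z i) / (u + z i)) ≠ 0 :=
    hν.2 _ fun i => hc (z i) (hz i)
  rw [generatingFunction_smul] at hgen
  rw [eval_smoothingPoly θ ν hden]
  exact mul_ne_zero (prod_ne_zero_iff.2 fun i _ => hden i) (right_ne_zero_of_mul hgen)

theorem smoothing_pos (hν : StronglyRayleigh n ℓ ν) {θ : ℝ} (hθ : 0 < θ) (T : Finset (Fin n)) :
    0 < smoothing ℓ θ ν T := by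
  obtain ⟨S, hS, hνS⟩ := hν.exists_pos
  exact sum_pos' (fun S' hS' => mul_nonneg (hν.1 S' (mem_powersetCard.1 hS').2) (by positivity))
    ⟨S, mem_powersetCard.2 ⟨subset_univ S, hS⟩, by positivity⟩

theorem smoothing (hν : StronglyRayleigh n ℓ ν) {θ : ℝ} (hθ0 : 0 < θ) (hθ1 : θ < 1) :
    StronglyRayleigh n ℓ (_root_.smoothing ℓ θ ν) := by
  refine ⟨fun T _ => (hν.smoothing_pos hθ0 T).le, fun z hz => ?_⟩
  have hstable := fun (u : ℂ) (hu : 0 ≤ u.im) => hν.eval_smoothingPoly_ne_zero hθ0.le hθ1 hz hu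
  have hlead : (smoothingPoly ℓ θ ν z).coeff n ≠ 0 := by
    have h := coeff_smoothingPoly (ℓ := ℓ) θ ν z n.zero_le
    rw [Nat.sub_zero, generatingFunction_zero] at h
    rw [h]
    exact_mod_cast (hν.smoothing_pos hθ0 ∅).ne'
  have hcoeff := coeff_ne_zero_of_forall_im_nonneg hstable
    ((Nat.sub_le n ℓ).trans (le_natDegree_of_ne_zero hlead))
  rwa [coeff_smoothingPoly θ ν z hν.card_le] at hcoeff

end StronglyRayleigh

theorem abs_sub_smoothing_le {n ℓ : ℕ} {ν : Finset (Fin n) → ℝ}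
    (hν : ∀ S : Finset (Fin n), S.card = ℓ → 0 ≤ ν S) {θ : ℝ} (hθ0 : 0 ≤ θ) (hθ1 : θ ≤ 1)
    {T : Finset (Fin n)} (hT : T.card = ℓ) :
    |ν T - smoothing ℓ θ ν T| ≤ θ * ∑ S ∈ powersetCard ℓ univ, ν S := by
  have hTmem : T ∈ powersetCard ℓ univ := mem_powersetCard.2 ⟨subset_univ T, hT⟩
  have hν' : ∀ S ∈ powersetCard ℓ univ, 0 ≤ ν S := fun S hS => hν S (mem_powersetCard.1 hS).2
  have hrest : ∀ S ∈ (powersetCard ℓ univ).erase T, ν S * θ ^ (S \ T).card ≤ θ * ν S := by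
    intro S hS
    obtain ⟨hST, hS⟩ := mem_erase.1 hS
    have hdiff : (S \ T).card ≠ 0 := by
      rw [card_ne_zero, sdiff_nonempty]
      exact fun hsub => hST (eq_of_subset_of_card_le hsub (by rw [hT, (mem_powersetCard.1 hS).2]))
    rw [mul_comm θ]
    exact mul_le_mul_of_nonneg_left (pow_le_of_le_one hθ0 hθ1 hdiff) (hν' S hS)
  have hsplit : smoothing ℓ θ ν T
      = ν T + ∑ S ∈ (powersetCard ℓ univ).erase T, ν S * θ ^ (S \ T).card := by
    rw [smoothing, ← add_sum_erase _ _ hTmem, sdiff_self, bot_eq_empty, card_empty, pow_zero,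
      mul_one]
  rw [hsplit, sub_add_cancel_left, abs_neg, abs_of_nonneg
    (sum_nonneg fun S hS => mul_nonneg (hν' S (mem_of_mem_erase hS)) (by positivity))]
  calc ∑ S ∈ (powersetCard ℓ univ).erase T, ν S * θ ^ (S \ T).card
      ≤ ∑ S ∈ (powersetCard ℓ univ).erase T, θ * ν S := sum_le_sum hrest
    _ ≤ ∑ S ∈ powersetCard ℓ univ, θ * ν S :=
      sum_le_sum_of_subset_of_nonneg (erase_subset T _)
        fun S hS _ => mul_nonneg hθ0 (hν' S hS)
    _ = θ * ∑ S ∈ powersetCard ℓ univ, ν S := (mul_sum _ _ _).symm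

theorem stmt1_general (n ℓ : ℕ)
    (ν : Finset (Fin n) → ℝ) (hν : StronglyRayleigh n ℓ ν)
    (ε : ℝ) (hε : 0 < ε) :
    ∃ νt : Finset (Fin n) → ℝ, StronglyRayleigh n ℓ νt ∧
      (∀ S : Finset (Fin n), S.card = ℓ → 0 < νt S) ∧
      (∀ S : Finset (Fin n), S.card = ℓ → |ν S - νt S| ≤ ε) := by
  set N := ∑ S ∈ powersetCard ℓ univ, ν S
  have hN : 0 ≤ N := sum_nonneg fun S hS => hν.1 S (mem_powersetCard.1 hS).2
  set θ := ε / (N + ε + 1)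
  have hθ0 : 0 < θ := by positivity
  have hθ1 : θ < 1 := (div_lt_one (by positivity)).2 (by linarith)
  have hθN : θ * N ≤ ε := by
    rw [div_mul_eq_mul_div, div_le_iff₀ (by positivity)]
    nlinarith
  exact ⟨smoothing ℓ θ ν, hν.smoothing hθ0 hθ1, fun T _ => hν.smoothing_pos hθ0 T,
    fun T hT => (abs_sub_smoothing_le hν.1 hθ0.le hθ1.le hT).trans hθN⟩

/-- any strongly Rayleigh `ν` on `ℓ`-subsets can be approximated within `ε`
by a strongly Rayleigh `ν̃` of full support. -/
theorem stmt1 (n ℓ : ℕ) (hℓ1 : 1 ≤ ℓ) (hℓn : ℓ ≤ n)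
    (ν : Finset (Fin n) → ℝ) (hν : StronglyRayleigh n ℓ ν)
    (ε : ℝ) (hε : 0 < ε) :
    ∃ νt : Finset (Fin n) → ℝ, StronglyRayleigh n ℓ νt ∧
      (∀ S : Finset (Fin n), S.card = ℓ → 0 < νt S) ∧
      (∀ S : Finset (Fin n), S.card = ℓ → |ν S - νt S| ≤ ε) :=
  stmt1_general n ℓ ν hν ε hε
end

section
/- Let μ and μ̃ be functions on the k-element subsets of {1,…,n} with nonnegative values, and let α ≥ 1 be such that μ(S) ≤ μ̃(S) ≤ α·μ(S) for every k-element set S. Suppose c is a map assigning to every V ⊆ {1,…,n} a subset c(V) ⊆ V that is value-preserving with respect to μ̃. Then c is an α-composable coreset for maximizing μ over k-element sets. -/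
open Finset

/-- `U ⊆ V` is value-preserving with respect to `μt` if for every `k`-element set `S`
and every `e ∈ S ∩ V` there exists `f ∈ U ∖ (S ∖ {e})` with `μt S ≤ μt ((S∖{e})∪{f})`. -/
def ValuePreserving (n k : ℕ) (μt : Finset (Fin n) → ℝ)
    (V U : Finset (Fin n)) : Prop :=
  U ⊆ V ∧ ∀ S : Finset (Fin n), S.card = k → ∀ e ∈ S ∩ V,
    ∃ f ∈ U \ (S.erase e), μt S ≤ μt (insert f (S.erase e))

/-- A map `c` with `c V ⊆ V` is an `α`-composable coreset for maximizing `μ` over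
`k`-element sets: for every collection `V_1, …, V_m` and every `k`-set `S` inside the
union of the `V_i`, some `k`-set `T` inside the union of the `c (V_i)` satisfies
`μ S ≤ α · μ T`. -/
def ComposableCoreset (n k : ℕ) (α : ℝ) (μ : Finset (Fin n) → ℝ)
    (c : Finset (Fin n) → Finset (Fin n)) : Prop :=
  (∀ V, c V ⊆ V) ∧
  ∀ (m : ℕ) (Vs : Fin m → Finset (Fin n)) (S : Finset (Fin n)),
    S ⊆ Finset.univ.biUnion Vs → S.card = k →
    ∃ T : Finset (Fin n),
      T ⊆ Finset.univ.biUnion (fun i => c (Vs i)) ∧ T.card = k ∧ μ S ≤ α * μ T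

/-- if `μ ≤ μ̃ ≤ α·μ` on `k`-sets and `c V` is always a value-preserving
subset of `V` with respect to `μ̃`, then `c` is an `α`-composable coreset for `μ`. -/
theorem stmt4 (n k : ℕ) (μ μt : Finset (Fin n) → ℝ)
    (hμ0 : ∀ S : Finset (Fin n), S.card = k → 0 ≤ μ S)
    (hμt0 : ∀ S : Finset (Fin n), S.card = k → 0 ≤ μt S)
    (α : ℝ) (hα : 1 ≤ α)
    (hsand : ∀ S : Finset (Fin n), S.card = k → μ S ≤ μt S ∧ μt S ≤ α * μ S)
    (c : Finset (Fin n) → Finset (Fin n))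
    (hvp : ∀ V, ValuePreserving n k μt V (c V)) :
    ComposableCoreset n k α μ c := by
  refine ⟨fun V => (hvp V).1, fun m Vs S hSsub hSk => ?_⟩
  set U : Finset (Fin n) := Finset.univ.biUnion (fun i => c (Vs i)) with hU
  -- key claim by strong induction on |S \ U|
  have key : ∀ N : ℕ, ∀ S : Finset (Fin n), (S \ U).card ≤ N →
      S ⊆ Finset.univ.biUnion Vs → S.card = k →
      ∃ T, T ⊆ U ∧ T.card = k ∧ μt S ≤ μt T := by
    intro N
    induction N with
    | zero =>
      intro S hcard hsub hk
      refine ⟨S, ?_, hk, le_refl _⟩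
      intro x hx
      by_contra hxU
      have : x ∈ S \ U := Finset.mem_sdiff.mpr ⟨hx, hxU⟩
      have : (S \ U).Nonempty := ⟨x, this⟩
      have := Finset.card_pos.mpr this
      omega
    | succ N ih =>
      intro S hcard hsub hk
      by_cases hdiff : (S \ U).card = 0
      · exact ih S (by omega) hsub hk
      · obtain ⟨e, he⟩ := Finset.card_pos.mp (Nat.pos_of_ne_zero hdiff)
        obtain ⟨heS, heU⟩ := Finset.mem_sdiff.mp he
        obtain ⟨i, _, hei⟩ := Finset.mem_biUnion.mp (hsub heS)
        obtain ⟨f, hf, hmono⟩ := (hvp (Vs i)).2 S hk e (Finset.mem_inter.mpr ⟨heS, hei⟩)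
        obtain ⟨hfc, hfne⟩ := Finset.mem_sdiff.mp hf
        have hfU : f ∈ U := Finset.mem_biUnion.mpr ⟨i, Finset.mem_univ i, hfc⟩
        have hfVi : f ∈ Vs i := (hvp (Vs i)).1 hfc
        set S' := insert f (S.erase e) with hS'
        have hS'k : S'.card = k := by
          rw [hS', Finset.card_insert_of_notMem hfne,
            Finset.card_erase_of_mem heS]
          have := Finset.card_pos.mpr ⟨e, heS⟩
          omega
        have hS'sub : S' ⊆ Finset.univ.biUnion Vs := by
          intro x hx
          rcases Finset.mem_insert.mp hx with rfl | hx
          · exact Finset.mem_biUnion.mpr ⟨i, Finset.mem_univ i, hfVi⟩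
          · exact hsub (Finset.mem_of_mem_erase hx)
        have hS'diff : (S' \ U).card ≤ N := by
          have hsub' : S' \ U ⊆ (S \ U).erase e := by
            intro x hx
            obtain ⟨hxS', hxU⟩ := Finset.mem_sdiff.mp hx
            rcases Finset.mem_insert.mp hxS' with rfl | hx2
            · exact absurd hfU hxU
            · exact Finset.mem_erase.mpr ⟨(Finset.mem_erase.mp hx2).1,
                Finset.mem_sdiff.mpr ⟨Finset.mem_of_mem_erase hx2, hxU⟩⟩
          have := Finset.card_le_card hsub'
          rw [Finset.card_erase_of_mem he] at this
          omega
        obtain ⟨T, hT1, hT2, hT3⟩ := ih S' hS'diff hS'sub hS'k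
        exact ⟨T, hT1, hT2, hmono.trans hT3⟩
  obtain ⟨T, hT1, hT2, hT3⟩ := key (S \ U).card S le_rfl hSsub hSk
  refine ⟨T, hT1, hT2, ?_⟩
  calc μ S ≤ μt S := (hsand S hSk).1
    _ ≤ μt T := hT3
    _ ≤ α * μ T := (hsand T hT2).2
end

section
/- Let v_1,…,v_n ∈ ℝ^d, and consider a partition matroid on {1,…,n} with parts P_1,…,P_s and integers k_1,…,k_s ≥ 1 of rank k = Σ_i k_i, with k ≤ d. Let μ_M(S) = det(Σ_{i∈S} v_i v_iᵀ) if S is a basis of the partition matroid and 0 otherwise. Then there exists a map c assigning to each V ⊆ {1,…,n} a subset c(V) ⊆ V with |c(V)| ≤ sk, which is a k^{2k}-composable coreset for maximizing μ_M over k-element sets. -/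
/-!
For every piece `V` and part `P i`, the coreset keeps a subfamily of `V ∩ P i` of maximal Gram
determinant, padded to at most `k` elements. Maximality makes every vector of `V ∩ P i` a
combination of the kept ones with coefficients in `[-1, 1]`. For a basis `S` of the union
(necessarily with `k = d`, since fewer than `d` rank-one terms have determinant `0`), expanding
`det [v_s]_{s ∈ S}` row by row gives at most `k ^ k` terms, each bounded by a determinant of a
family that takes one kept vector per row from the same part, hence a basis of the coresets.
Squaring gives the factor `k ^ (2 * k)`.
-/

open Finset

/-- `detVal v S = det(Σ_{i∈S} v_i v_iᵀ)`. -/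
noncomputable def detVal (n d : ℕ) (v : Fin n → Fin d → ℝ)
    (S : Finset (Fin n)) : ℝ :=
  (∑ i ∈ S, Matrix.vecMulVec (v i) (v i)).det

open Matrix

section GramDet

variable {ι m : Type*} [Fintype ι] [DecidableEq ι] [Fintype m]

noncomputable def gramDet (u : ι → m → ℝ) : ℝ :=
  (of u * (of u)ᵀ).det

lemma det_updateRow_one {R : Type*} [CommRing R] (i : ι) (c : ι → R) :
    ((1 : Matrix ι ι R).updateRow i c).det = c i := by
  simpa [← vecMul_eq_sum] using det_updateRow_sum (1 : Matrix ι ι R) i c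

omit [Fintype m] in
lemma of_update_sum_smul (u : ι → m → ℝ) (i : ι) (c : ι → ℝ) :
    of (Function.update u i (∑ j, c j • u j)) = (1 : Matrix ι ι ℝ).updateRow i c * of u := by
  rw [updateRow_mul, Matrix.one_mul, vecMul_eq_sum]
  rfl

lemma gramDet_update_sum_smul (u : ι → m → ℝ) (i : ι) (c : ι → ℝ) :
    gramDet (Function.update u i (∑ j, c j • u j)) = c i ^ 2 * gramDet u := by
  rw [gramDet, gramDet, of_update_sum_smul, transpose_mul, Matrix.mul_assoc,
    ← Matrix.mul_assoc (of u), ← Matrix.mul_assoc, det_mul, det_mul, det_transpose,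
    det_updateRow_one]
  ring

lemma gramDet_nonneg (u : ι → m → ℝ) : 0 ≤ gramDet u := by
  have h := (posSemidef_self_mul_conjTranspose (of u)).det_nonneg
  rwa [conjTranspose_eq_transpose_of_trivial] at h

lemma abs_le_one_of_gramDet_update_le {u : ι → m → ℝ} (hu : 0 < gramDet u) {c : ι → ℝ} (i : ι)
    (h : gramDet (Function.update u i (∑ j, c j • u j)) ≤ gramDet u) : |c i| ≤ 1 := by
  rw [gramDet_update_sum_smul] at h
  rw [← sq_le_one_iff_abs_le_one]
  nlinarith

omit [DecidableEq ι] in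
lemma linearIndependent_row_iff_rank_eq {n K : Type*} [Fintype n] [Field K] (A : Matrix ι n K) :
    LinearIndependent K A.row ↔ A.rank = Fintype.card ι := by
  rw [linearIndependent_iff_card_eq_finrank_span, rank_eq_finrank_span_row, Set.finrank, eq_comm]

lemma gramDet_pos_iff {u : ι → m → ℝ} : 0 < gramDet u ↔ LinearIndependent ℝ u := by
  rw [(gramDet_nonneg u).lt_iff_ne', gramDet, ← isUnit_iff_ne_zero, ← isUnit_iff_isUnit_det,
    ← linearIndependent_rows_iff_isUnit, linearIndependent_row_iff_rank_eq,
    rank_self_mul_transpose, ← linearIndependent_row_iff_rank_eq]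
  rfl

end GramDet

section UnitBoundedComb

variable {ι m : Type*} (v : ι → m → ℝ)

def IsUnitBoundedComb (B : Finset ι) (x : m → ℝ) : Prop :=
  ∃ c : ι → ℝ, (∀ l, |c l| ≤ 1) ∧ x = ∑ l ∈ B, c l • v l

lemma IsUnitBoundedComb.mono [DecidableEq ι] {v : ι → m → ℝ} {B D : Finset ι} {x : m → ℝ}
    (h : IsUnitBoundedComb v B x) (hBD : B ⊆ D) : IsUnitBoundedComb v D x := by
  obtain ⟨c, hc, rfl⟩ := h
  refine ⟨fun l => if l ∈ B then c l else 0, fun l => ?_, ?_⟩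
  · by_cases hl : l ∈ B <;> simp [hl, hc]
  · rw [← sum_subset hBD fun l _ hl => by simp [hl]]
    exact sum_congr rfl fun l hl => by simp [hl]

lemma exists_linearIndependent_spanning (W : Finset ι) :
    ∃ (r : ℕ) (t : Fin r → ι), (∀ i, t i ∈ W) ∧ LinearIndependent ℝ (v ∘ t) ∧
      ∀ j ∈ W, v j ∈ Submodule.span ℝ (Set.range (v ∘ t)) := by
  obtain ⟨κ, a, ha, hspan, hli⟩ := exists_linearIndependent' ℝ fun j : W => v j
  have : Finite κ := Finite.of_injective a ha
  let e := Finite.equivFin κ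
  refine ⟨Nat.card κ, fun i => a (e.symm i), fun i => (a _).2, hli.comp _ e.symm.injective,
    fun j hj => ?_⟩
  have hrange : Set.range (v ∘ fun i => (a (e.symm i) : ι)) = Set.range ((fun j : W => v j) ∘ a) :=
    EquivLike.range_comp ((fun j : W => v j) ∘ a) e.symm
  rw [hrange, hspan]
  exact Submodule.subset_span ⟨⟨j, hj⟩, rfl⟩

/-- Take a tuple from `W` of maximal Gram determinant: it spans `v '' W`, and replacing one of its
vectors by `v j` multiplies the Gram determinant by the square of the corresponding coefficient
of `v j`, so maximality bounds every coefficient by `1`. -/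
lemma exists_isUnitBoundedComb [Fintype m] [DecidableEq ι] (W : Finset ι) :
    ∃ B ⊆ W, B.card ≤ Fintype.card m ∧ ∀ j ∈ W, IsUnitBoundedComb v B (v j) := by
  obtain ⟨r, t, htW, htli, htspan⟩ := exists_linearIndependent_spanning v W
  obtain ⟨b, hbW, hbmax⟩ := exists_max_image (Fintype.piFinset fun _ : Fin r => W)
    (fun b => gramDet (v ∘ b)) ⟨t, Fintype.mem_piFinset.2 htW⟩
  rw [Fintype.mem_piFinset] at hbW
  have hbpos : 0 < gramDet (v ∘ b) :=
    (gramDet_pos_iff.2 htli).trans_le (hbmax t (Fintype.mem_piFinset.2 htW))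
  have hbli : LinearIndependent ℝ (v ∘ b) := gramDet_pos_iff.1 hbpos
  have hbinj : Function.Injective b := hbli.injective.of_comp
  have hspan : Submodule.span ℝ (Set.range (v ∘ b)) = Submodule.span ℝ (Set.range (v ∘ t)) :=
    Submodule.eq_of_le_of_finrank_eq
      (Submodule.span_le.2 (Set.range_subset_iff.2 fun i => htspan _ (hbW i)))
      (by rw [finrank_span_eq_card hbli, finrank_span_eq_card htli])
  refine ⟨univ.image b, image_subset_iff.2 fun i _ => hbW i, card_image_le.trans ?_,
    fun j hj => ?_⟩
  · simpa using hbli.fintype_card_le_finrank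
  obtain ⟨cc, hcc⟩ := (Submodule.mem_span_range_iff_exists_fun ℝ).1 (hspan ▸ htspan j hj)
  have hcc1 (i : Fin r) : |cc i| ≤ 1 := by
    refine abs_le_one_of_gramDet_update_le hbpos i ?_
    rw [hcc, ← Function.comp_update]
    refine hbmax _ (Fintype.mem_piFinset.2 fun i' => ?_)
    rcases eq_or_ne i' i with rfl | hi
    · simpa using hj
    · simpa [Function.update_of_ne hi] using hbW i'
  refine ⟨Function.extend b cc 0, fun l => ?_, ?_⟩
  · by_cases hl : ∃ i, b i = l
    · obtain ⟨i, rfl⟩ := hl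
      rw [hbinj.extend_apply]
      exact hcc1 i
    · simp [Function.extend_apply' _ _ _ hl]
  · rw [sum_image fun i _ i' _ h => hbinj h, ← hcc]
    simp [hbinj.extend_apply]

lemma exists_subset_superset_card_le {α : Type*} [DecidableEq α] {B W : Finset α} {k : ℕ}
    (hBW : B ⊆ W) (hB : B.card ≤ k) :
    ∃ D, B ⊆ D ∧ D ⊆ W ∧ D.card ≤ k ∧ (k ≤ D.card ∨ D = W) := by
  obtain ⟨D, hBD, hDW, hD⟩ :=
    exists_subsuperset_card_eq hBW (le_min (card_le_card hBW) hB) (min_le_left W.card k)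
  refine ⟨D, hBD, hDW, hD ▸ min_le_right _ _, ?_⟩
  rcases le_total k W.card with h | h
  · exact .inl (by rw [hD, min_eq_right h])
  · exact .inr (eq_of_subset_of_card_le hDW (by rw [hD, min_eq_left h]))

lemma exists_isUnitBoundedComb_selector [Fintype m] [DecidableEq ι] (k : ℕ) :
    ∃ D : Finset ι → Finset ι, (∀ W, D W ⊆ W) ∧ (∀ W, (D W).card ≤ k) ∧
      (∀ W, k ≤ (D W).card ∨ D W = W) ∧
      (Fintype.card m ≤ k → ∀ W, ∀ j ∈ W, IsUnitBoundedComb v (D W) (v j)) := by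
  have hselect (W : Finset ι) : ∃ D ⊆ W, D.card ≤ k ∧ (k ≤ D.card ∨ D = W) ∧
      (Fintype.card m ≤ k → ∀ j ∈ W, IsUnitBoundedComb v D (v j)) := by
    by_cases hk : Fintype.card m ≤ k
    · obtain ⟨B, hBW, hBcard, hB⟩ := exists_isUnitBoundedComb v W
      obtain ⟨D, hBD, hDW, hDk, hDfull⟩ := exists_subset_superset_card_le hBW (hBcard.trans hk)
      exact ⟨D, hDW, hDk, hDfull, fun _ j hj => (hB j hj).mono hBD⟩
    · obtain ⟨D, -, hDW, hDk, hDfull⟩ := exists_subset_superset_card_le (empty_subset W) (by simp)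
      exact ⟨D, hDW, hDk, hDfull, fun h => absurd h hk⟩
  choose D hDW hDk hDfull hDspan using hselect
  exact ⟨D, hDW, hDk, hDfull, fun hk W => hDspan W hk⟩

end UnitBoundedComb

section RowExpansion

variable {ι κ : Type*} [Fintype κ] [DecidableEq κ]

lemma det_of_sum_smul {R : Type*} [CommRing R] [DecidableEq ι] (w : ι → κ → R)
    (B : κ → Finset ι) (c : κ → ι → R) :
    (of fun a => ∑ l ∈ B a, c a l • w l).det =
      ∑ p ∈ Fintype.piFinset B, (∏ a, c a (p a)) * (of (w ∘ p)).det := by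
  change (detRowAlternating : (κ → R) [⋀^κ]→ₗ[R] R).toMultilinearMap
    (fun a => ∑ l ∈ B a, c a l • w l) = _
  rw [MultilinearMap.map_sum_finset]
  refine sum_congr rfl fun p _ => ?_
  rw [MultilinearMap.map_smul_univ, smul_eq_mul]
  rfl

lemma exists_abs_det_le_of_isUnitBoundedComb [DecidableEq ι] (w : ι → κ → ℝ) (u : κ → κ → ℝ)
    (B : κ → Finset ι) {N : ℕ} (hB : ∀ a, (B a).card ≤ N)
    (hu : ∀ a, IsUnitBoundedComb w (B a) (u a)) (hdet : (of u).det ≠ 0) :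
    ∃ p ∈ Fintype.piFinset B, |(of u).det| ≤ N ^ Fintype.card κ * |(of (w ∘ p)).det| := by
  choose c hc hu using hu
  have hexp : (of u).det = ∑ p ∈ Fintype.piFinset B, (∏ a, c a (p a)) * (of (w ∘ p)).det := by
    rw [← det_of_sum_smul, ← funext hu]
  have hne : (Fintype.piFinset B).Nonempty := by
    rw [nonempty_iff_ne_empty]
    rintro h
    rw [h, sum_empty] at hexp
    exact hdet hexp
  obtain ⟨p, hp, hmax⟩ := exists_max_image _ (fun p => |(of (w ∘ p)).det|) hne
  refine ⟨p, hp, ?_⟩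
  have hcard : ((Fintype.piFinset B).card : ℝ) ≤ N ^ Fintype.card κ := by
    rw [Fintype.card_piFinset]
    exact_mod_cast prod_le_pow_card _ _ _ fun a _ => hB a
  calc |(of u).det|
      ≤ ∑ q ∈ Fintype.piFinset B, |(∏ a, c a (q a)) * (of (w ∘ q)).det| :=
        hexp ▸ abs_sum_le_sum_abs _ _
    _ ≤ ∑ q ∈ Fintype.piFinset B, |(of (w ∘ p)).det| := by
        refine sum_le_sum fun q hq => ?_
        rw [abs_mul, abs_prod]
        exact (mul_le_of_le_one_left (abs_nonneg _)
          (prod_le_one (fun _ _ => abs_nonneg _) fun a _ => hc a _)).trans (hmax q hq)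
    _ = (Fintype.piFinset B).card * |(of (w ∘ p)).det| := by rw [sum_const, nsmul_eq_mul]
    _ ≤ N ^ Fintype.card κ * |(of (w ∘ p)).det| := by gcongr

end RowExpansion

section DetVal

variable {n d : ℕ} (v : Fin n → Fin d → ℝ)

lemma detVal_image {r : ℕ} {e : Fin r → Fin n} (he : Function.Injective e) :
    detVal n d v (univ.image e) = ((of (v ∘ e))ᵀ * of (v ∘ e)).det := by
  rw [detVal, sum_image fun a _ b _ h => he h]
  congr 1
  ext x y
  simp [Matrix.sum_apply, mul_apply, vecMulVec_apply]

lemma detVal_image_eq_sq {e : Fin d → Fin n} (he : Function.Injective e) :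
    detVal n d v (univ.image e) = (of (v ∘ e)).det ^ 2 := by
  rw [detVal_image v he, det_mul, det_transpose, sq]

lemma detVal_nonneg (S : Finset (Fin n)) : 0 ≤ detVal n d v S := by
  have h := (posSemidef_sum S fun i _ => posSemidef_vecMulVec_self_star (v i)).det_nonneg
  exact h

lemma detVal_eq_zero_of_card_lt {S : Finset (Fin n)} (hS : S.card < d) : detVal n d v S = 0 := by
  rw [← image_orderEmbOfFin_univ S rfl, detVal_image v (S.orderEmbOfFin rfl).injective]
  set A := of (v ∘ S.orderEmbOfFin rfl)
  by_contra h
  have hrank := rank_of_isUnit _ ((isUnit_iff_isUnit_det _).2 (isUnit_iff_ne_zero.2 h))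
  have : (Aᵀ * A).rank ≤ S.card := (rank_mul_le_right _ _).trans (rank_le_height A)
  simp only [Fintype.card_fin] at hrank
  omega

end DetVal

section PartitionCoreset

variable {n s : ℕ} (P : Fin s → Finset (Fin n))

def partCoreset (D : Finset (Fin n) → Finset (Fin n)) (V : Finset (Fin n)) : Finset (Fin n) :=
  univ.biUnion fun i => D (V ∩ P i)

variable {P} {D : Finset (Fin n) → Finset (Fin n)}

lemma partCoreset_subset (hD : ∀ W, D W ⊆ W) (V : Finset (Fin n)) : partCoreset P D V ⊆ V :=
  biUnion_subset.2 fun _ _ => (hD _).trans inter_subset_left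

lemma card_partCoreset_le {k : ℕ} (hD : ∀ W, (D W).card ≤ k) (V : Finset (Fin n)) :
    (partCoreset P D V).card ≤ s * k :=
  card_biUnion_le.trans (by simpa using sum_le_sum fun i (_ : i ∈ univ) => hD (V ∩ P i))

lemma mem_partCoreset_or_le_card (hPcover : univ.biUnion P = univ) {k : ℕ}
    (hD : ∀ W, k ≤ (D W).card ∨ D W = W) {V : Finset (Fin n)} {x : Fin n} (hx : x ∈ V) :
    x ∈ partCoreset P D V ∨ k ≤ (partCoreset P D V).card := by
  obtain ⟨i, -, hxi⟩ := mem_biUnion.1 (hPcover ▸ mem_univ x : x ∈ univ.biUnion P)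
  have hsub : D (V ∩ P i) ⊆ partCoreset P D V := subset_biUnion_of_mem (fun i => D (V ∩ P i)) (mem_univ i)
  rcases hD (V ∩ P i) with h | h
  · exact .inr (h.trans (card_le_card hsub))
  · exact .inl (hsub (by rw [h]; exact mem_inter.2 ⟨hx, hxi⟩))

end PartitionCoreset

lemma exists_subset_biUnion_card_eq {n k m : ℕ} {c : Finset (Fin n) → Finset (Fin n)}
    (hc : ∀ V, ∀ x ∈ V, x ∈ c V ∨ k ≤ (c V).card) {Vs : Fin m → Finset (Fin n)}
    {S : Finset (Fin n)} (hS : S ⊆ univ.biUnion Vs) (hSk : S.card = k) :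
    ∃ T ⊆ univ.biUnion fun i => c (Vs i), T.card = k := by
  by_cases hbig : ∃ i, k ≤ (c (Vs i)).card
  · obtain ⟨i, hi⟩ := hbig
    obtain ⟨T, hT, hTk⟩ := exists_subset_card_eq hi
    exact ⟨T, hT.trans (subset_biUnion_of_mem (fun i => c (Vs i)) (mem_univ i)), hTk⟩
  · push Not at hbig
    refine ⟨S, fun x hx => ?_, hSk⟩
    obtain ⟨i, -, hxi⟩ := mem_biUnion.1 (hS hx)
    exact mem_biUnion.2 ⟨i, mem_univ i, ((hc _ x hxi).resolve_right (hbig i).not_ge)⟩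

lemma image_inter_eq_image_filter {n s r : ℕ} {P : Fin s → Finset (Fin n)}
    (hPdisj : ∀ i j : Fin s, i ≠ j → Disjoint (P i) (P j)) {f : Fin r → Fin n}
    {part : Fin r → Fin s} (hf : ∀ a, f a ∈ P (part a)) (i : Fin s) :
    univ.image f ∩ P i = (univ.filter fun a => part a = i).image f := by
  ext x
  simp only [mem_inter, mem_image, mem_filter, mem_univ, true_and]
  constructor
  · rintro ⟨⟨a, rfl⟩, hai⟩
    refine ⟨a, ?_, rfl⟩
    by_contra hne
    exact disjoint_left.1 (hPdisj _ _ hne) (hf a) hai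
  · rintro ⟨a, rfl, rfl⟩
    exact ⟨⟨a, rfl⟩, hf a⟩

lemma exists_basis_detVal_le {n s k m : ℕ} (v : Fin n → Fin k → ℝ) {P : Fin s → Finset (Fin n)}
    (hPdisj : ∀ i j : Fin s, i ≠ j → Disjoint (P i) (P j)) (hPcover : univ.biUnion P = univ)
    {D : Finset (Fin n) → Finset (Fin n)} (hDW : ∀ W, D W ⊆ W) (hDk : ∀ W, (D W).card ≤ k)
    (hDspan : ∀ W, ∀ j ∈ W, IsUnitBoundedComb v (D W) (v j)) {Vs : Fin m → Finset (Fin n)}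
    {S : Finset (Fin n)} (hS : S ⊆ univ.biUnion Vs) (hSk : S.card = k)
    (hdet : detVal n k v S ≠ 0) :
    ∃ T ⊆ univ.biUnion fun i => partCoreset P D (Vs i), T.card = k ∧
      (∀ i, (T ∩ P i).card = (S ∩ P i).card) ∧ detVal n k v S ≤ k ^ (2 * k) * detVal n k v T := by
  set e := S.orderEmbOfFin hSk
  have hSe : S = univ.image e := (image_orderEmbOfFin_univ S hSk).symm
  have hpiece (a : Fin k) : ∃ i, e a ∈ Vs i := by
    obtain ⟨i, -, h⟩ := mem_biUnion.1 (hS (S.orderEmbOfFin_mem hSk a))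
    exact ⟨i, h⟩
  have hpart (a : Fin k) : ∃ i, e a ∈ P i := by
    obtain ⟨i, -, h⟩ := mem_biUnion.1 (hPcover ▸ mem_univ (e a) : e a ∈ univ.biUnion P)
    exact ⟨i, h⟩
  choose piece hpiece using hpiece
  choose part hpart using hpart
  set B := fun a => D (Vs (piece a) ∩ P (part a))
  have hdetS : (of (v ∘ e)).det ≠ 0 := by
    rw [hSe, detVal_image_eq_sq v e.injective] at hdet
    exact pow_ne_zero_iff two_ne_zero |>.1 hdet
  obtain ⟨p, hp, hle⟩ := exists_abs_det_le_of_isUnitBoundedComb v (v ∘ e) B (fun a => hDk _)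
    (fun a => hDspan _ _ (mem_inter.2 ⟨hpiece a, hpart a⟩)) hdetS
  rw [Fintype.mem_piFinset] at hp
  rw [Fintype.card_fin] at hle
  have hdetT : (of (v ∘ p)).det ≠ 0 := by
    rintro h
    rw [h, abs_zero, mul_zero, abs_nonpos_iff] at hle
    exact hdetS hle
  have hpinj : Function.Injective p := fun a a' h => by
    by_contra hne
    exact hdetT (det_zero_of_row_eq hne (congrArg v h))
  have hpP (a : Fin k) : p a ∈ P (part a) := mem_of_mem_inter_right (hDW _ (hp a))
  refine ⟨univ.image p, fun x hx => ?_, by simp [card_image_of_injective _ hpinj], fun i => ?_, ?_⟩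
  · obtain ⟨a, -, rfl⟩ := mem_image.1 hx
    exact mem_biUnion.2 ⟨piece a, mem_univ _, mem_biUnion.2 ⟨part a, mem_univ _, hp a⟩⟩
  · rw [hSe, image_inter_eq_image_filter hPdisj hpP, image_inter_eq_image_filter hPdisj hpart,
      card_image_of_injective _ hpinj, card_image_of_injective _ e.injective]
  · rw [hSe, detVal_image_eq_sq v e.injective, detVal_image_eq_sq v hpinj, ← sq_abs,
      ← sq_abs (of (v ∘ p)).det, pow_mul', ← mul_pow]
    exact pow_le_pow_left₀ (abs_nonneg _) hle 2

theorem stmt11_general (n d s k : ℕ) (v : Fin n → Fin d → ℝ)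
    (P : Fin s → Finset (Fin n))
    (hPdisj : ∀ i j : Fin s, i ≠ j → Disjoint (P i) (P j))
    (hPcover : Finset.univ.biUnion P = (Finset.univ : Finset (Fin n)))
    (kk : Fin s → ℕ) (hkd : k ≤ d) :
    ∃ c : Finset (Fin n) → Finset (Fin n),
      (∀ V, c V ⊆ V) ∧
      (∀ V, (c V).card ≤ s * k) ∧
      ComposableCoreset n k ((k : ℝ) ^ (2 * k))
        (fun S => if ∀ i, (S ∩ P i).card = kk i then detVal n d v S else 0) c := by
  obtain ⟨D, hDW, hDk, hDfull, hDspan⟩ := exists_isUnitBoundedComb_selector v k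
  refine ⟨partCoreset P D, partCoreset_subset hDW, card_partCoreset_le hDk,
    partCoreset_subset hDW, fun m Vs S hS hSk => ?_⟩
  dsimp only
  by_cases hpos : 0 < if ∀ i, (S ∩ P i).card = kk i then detVal n d v S else 0
  · obtain ⟨hbasis, hpos⟩ : (∀ i, (S ∩ P i).card = kk i) ∧ 0 < detVal n d v S := by
      split_ifs at hpos with h
      exacts [⟨h, hpos⟩, (lt_irrefl 0 hpos).elim]
    obtain rfl : k = d :=
      le_antisymm hkd (not_lt.1 fun h => hpos.ne' (detVal_eq_zero_of_card_lt v (hSk ▸ h)))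
    obtain ⟨T, hT, hTk, hTP, hle⟩ := exists_basis_detVal_le v hPdisj hPcover hDW hDk
      (hDspan (Fintype.card_fin k).le) hS hSk hpos.ne'
    refine ⟨T, hT, hTk, ?_⟩
    rwa [if_pos hbasis, if_pos fun i => (hTP i).trans (hbasis i)]
  · obtain ⟨T, hT, hTk⟩ := exists_subset_biUnion_card_eq
      (fun V x hx => mem_partCoreset_or_le_card hPcover hDfull hx) hS hSk
    refine ⟨T, hT, hTk, (not_lt.1 hpos).trans (mul_nonneg (by positivity) ?_)⟩
    split_ifs
    exacts [detVal_nonneg v T, le_rfl]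

/-- for determinant maximization under a partition matroid constraint
with parts `P_1, …, P_s`, quotas `k_i ≥ 1`, rank `k = Σ k_i ≤ d`, there exists a map
`c` with `|c(V)| ≤ sk` which is a `k^{2k}`-composable coreset for
`μ_M(S) = 1[S basis]·det(Σ_{i∈S} v_i v_iᵀ)`. -/
theorem stmt11 (n d s k : ℕ) (v : Fin n → Fin d → ℝ)
    (P : Fin s → Finset (Fin n))
    (hPdisj : ∀ i j : Fin s, i ≠ j → Disjoint (P i) (P j))
    (hPcover : Finset.univ.biUnion P = (Finset.univ : Finset (Fin n)))
    (kk : Fin s → ℕ) (hkk : ∀ i, 1 ≤ kk i) (hsum : ∑ i, kk i = k) (hkd : k ≤ d) :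
    ∃ c : Finset (Fin n) → Finset (Fin n),
      (∀ V, c V ⊆ V) ∧
      (∀ V, (c V).card ≤ s * k) ∧
      ComposableCoreset n k ((k : ℝ) ^ (2 * k))
        (fun S => if ∀ i, (S ∩ P i).card = kk i then detVal n d v S else 0) c :=
  stmt11_general n d s k v P hPdisj hPcover kk hkd
end

section
/- Let v_1,…,v_n ∈ ℝ^d, let V ⊆ {1,…,n}, let k ≥ 1, k_V ≥ 1 and α ≥ 1. Suppose U = U_1∪…∪U_{k_V} ⊆ V, where the sets U_i are pairwise disjoint and, for each i = 1,…,k_V, the vector set {v_j : j ∈ U_i} is an α-spectral spanner of {v_j : j ∈ V_i} with V_i := V∖(U_1∪…∪U_{i−1}). Then for every k-element set S ⊆ {1,…,n} with |S∩V| ≤ k_V there exist probability distributions (μ_e)_{e∈(S∩V)∖U} on U with pairwise disjoint supports, each support disjoint from S, such that v_e v_eᵀ ⪯ α·E_{j∼μ_e}[v_j v_jᵀ] for every e ∈ (S∩V)∖U; in particular, Σ_{i∈S} v_i v_iᵀ ⪯ Σ_{i∈S, i∉(S∩V)∖U} v_i v_iᵀ + α·Σ_{e∈(S∩V)∖U}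 E_{j∼μ_e}[v_j v_jᵀ] in the Loewner order. -/
open Finset

/-- `{v_j : j ∈ U}` is an `α`-spectral spanner of `{v_j : j ∈ V}`: for every `e ∈ V`
there is a probability distribution `p` supported on `U` with
`v_e v_eᵀ ⪯ α·E_{j∼p}[v_j v_jᵀ]` in the Loewner order. -/
def SpectralSpanner (n d : ℕ) (v : Fin n → Fin d → ℝ) (α : ℝ)
    (V U : Finset (Fin n)) : Prop :=
  U ⊆ V ∧ ∀ e ∈ V, ∃ p : Fin n → ℝ,
    (∀ j, 0 ≤ p j) ∧ (∑ j, p j = 1) ∧ (∀ j, p j ≠ 0 → j ∈ U) ∧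
    (α • (∑ j, p j • Matrix.vecMulVec (v j) (v j)) -
      Matrix.vecMulVec (v e) (v e)).PosSemidef

/-- if `U = U_1 ∪ … ∪ U_{k_V} ⊆ V` with the `U_i` pairwise disjoint and
`{v_j : j ∈ U_i}` an `α`-spectral spanner of `{v_j : j ∈ V_i}` where
`V_i = V ∖ (U_1 ∪ … ∪ U_{i-1})`, then for every `k`-set `S` with `|S ∩ V| ≤ k_V` there
are probability distributions `(p_e)_{e ∈ (S∩V)∖U}` on `U`, with pairwise disjoint
supports each disjoint from `S`, such that `v_e v_eᵀ ⪯ α·E_{j∼p_e}[v_j v_jᵀ]` for each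
`e`; in particular
`Σ_{i∈S} v_i v_iᵀ ⪯ Σ_{i∈S∖((S∩V)∖U)} v_i v_iᵀ + α·Σ_{e∈(S∩V)∖U} E_{j∼p_e}[v_j v_jᵀ]`. -/
theorem stmt15 (n d k kV : ℕ) (hk : 1 ≤ k) (hkV : 1 ≤ kV)
    (α : ℝ) (hα : 1 ≤ α) (v : Fin n → Fin d → ℝ)
    (V : Finset (Fin n)) (Us : Fin kV → Finset (Fin n))
    (hdisj : ∀ i j : Fin kV, i ≠ j → Disjoint (Us i) (Us j))
    (hspan : ∀ i : Fin kV, SpectralSpanner n d v α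
      (V \ ((Finset.univ.filter (fun j => j < i)).biUnion Us)) (Us i))
    (U : Finset (Fin n)) (hU : U = Finset.univ.biUnion Us) (hUV : U ⊆ V)
    (S : Finset (Fin n)) (hS : S.card = k) (hSV : (S ∩ V).card ≤ kV) :
    ∃ p : Fin n → Fin n → ℝ,
      (∀ e ∈ (S ∩ V) \ U,
        (∀ j, 0 ≤ p e j) ∧ (∑ j, p e j = 1) ∧
        (∀ j, p e j ≠ 0 → j ∈ U ∧ j ∉ S) ∧
        (α • (∑ j, p e j • Matrix.vecMulVec (v j) (v j)) -
          Matrix.vecMulVec (v e) (v e)).PosSemidef) ∧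
      (∀ e₁ ∈ (S ∩ V) \ U, ∀ e₂ ∈ (S ∩ V) \ U, e₁ ≠ e₂ →
        ∀ j, p e₁ j = 0 ∨ p e₂ j = 0) ∧
      ((∑ e ∈ S \ ((S ∩ V) \ U), Matrix.vecMulVec (v e) (v e)) +
        α • (∑ e ∈ (S ∩ V) \ U, ∑ j, p e j • Matrix.vecMulVec (v j) (v j)) -
        ∑ i ∈ S, Matrix.vecMulVec (v i) (v i)).PosSemidef := by
  classical
  have hSne : S.Nonempty := Finset.card_pos.mp (by omega)
  obtain ⟨s₀, hs₀⟩ := hSne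
  set T : Finset (Fin n) := (S ∩ V) \ U with hT
  set I : Finset (Fin kV) := Finset.univ.filter (fun i => Disjoint (Us i) S) with hI
  set J : Finset (Fin kV) := Finset.univ.filter (fun i => ¬ Disjoint (Us i) S) with hJ
  have hJmap : ∀ i ∈ J, ((Us i) ∩ S).Nonempty := by
    intro i hi
    rw [hJ, Finset.mem_filter] at hi
    exact Finset.not_disjoint_iff_nonempty_inter.mp hi.2
  have hg_mem : ∀ i ∈ J, (fun i => if h : ((Us i) ∩ S).Nonempty then h.choose else s₀) i ∈ Us i ∩ S := by
    intro i hi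
    have h := hJmap i hi
    simp only [dif_pos h]
    exact h.choose_spec
  have hJcard : J.card ≤ (S ∩ U).card := by
    apply Finset.card_le_card_of_injOn (fun i => if h : ((Us i) ∩ S).Nonempty then h.choose else s₀)
    · intro i hi
      have := Finset.mem_inter.mp (hg_mem i hi)
      refine Finset.mem_inter.mpr ⟨this.2, ?_⟩
      rw [hU]
      exact Finset.mem_biUnion.mpr ⟨i, Finset.mem_univ i, this.1⟩
    · intro i hi j hj hij
      by_contra hne
      have h1 := (Finset.mem_inter.mp (hg_mem i hi)).1
      have h2 := (Finset.mem_inter.mp (hg_mem j hj)).1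
      rw [hij] at h1
      exact Finset.disjoint_left.mp (hdisj i j hne) h1 h2
  have hSU : (S ∩ V) ∩ U = S ∩ U := by
    rw [Finset.inter_assoc, Finset.inter_eq_right.mpr hUV]
  have hTcard : T.card + (S ∩ U).card = (S ∩ V).card := by
    rw [hT, ← hSU]
    exact Finset.card_sdiff_add_card_inter _ _
  have hIJ : I.card + J.card = kV := by
    rw [hI, hJ]
    rw [Finset.card_filter_add_card_filter_not]
    simp
  have hTI : T.card ≤ I.card := by omega
  have hcard : Fintype.card T ≤ Fintype.card I := by
    simpa [Fintype.card_coe] using hTI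
  obtain ⟨f⟩ := Function.Embedding.nonempty_of_card_le hcard
  have hUsub : ∀ (i : Fin kV), Us i ⊆ U := by
    intro i x hx
    rw [hU]
    exact Finset.mem_biUnion.mpr ⟨i, Finset.mem_univ i, hx⟩
  have hIdisj : ∀ (x : I), Disjoint (Us (x : Fin kV)) S := by
    intro x
    exact (Finset.mem_filter.mp x.2).2
  have key : ∀ (e : Fin n) (he : e ∈ T), ∃ q : Fin n → ℝ,
      (∀ j, 0 ≤ q j) ∧ (∑ j, q j = 1) ∧ (∀ j, q j ≠ 0 → j ∈ Us ((f ⟨e, he⟩ : I) : Fin kV)) ∧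
      (α • (∑ j, q j • Matrix.vecMulVec (v j) (v j)) -
        Matrix.vecMulVec (v e) (v e)).PosSemidef := by
    intro e he
    have heT := he
    rw [hT, Finset.mem_sdiff, Finset.mem_inter] at heT
    obtain ⟨⟨heS, heV⟩, heU⟩ := heT
    obtain ⟨_, hsp⟩ := hspan ((f ⟨e, he⟩ : I) : Fin kV)
    apply hsp e
    rw [Finset.mem_sdiff]
    refine ⟨heV, fun hc => heU ?_⟩
    obtain ⟨i, hi, hmem⟩ := Finset.mem_biUnion.mp hc
    exact hUsub i hmem
  choose q hq0 hq1 hqU hqPSD using key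
  refine ⟨fun e j => if h : e ∈ T then q e h j else 0, ?_, ?_, ?_⟩
  · intro e he
    simp only [dif_pos he]
    refine ⟨hq0 e he, hq1 e he, ?_, hqPSD e he⟩
    intro j hj
    have hjU := hqU e he j hj
    refine ⟨hUsub _ hjU, ?_⟩
    exact Finset.disjoint_left.mp (hIdisj (f ⟨e, he⟩)) hjU
  · intro e₁ he₁ e₂ he₂ hne j
    by_contra hc
    push_neg at hc
    obtain ⟨h1, h2⟩ := hc
    rw [dif_pos he₁] at h1
    rw [dif_pos he₂] at h2
    have hj1 := hqU e₁ he₁ j h1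
    have hj2 := hqU e₂ he₂ j h2
    have hfne : ((f ⟨e₁, he₁⟩ : I) : Fin kV) ≠ ((f ⟨e₂, he₂⟩ : I) : Fin kV) := by
      intro hfe
      apply hne
      have := f.injective (Subtype.ext hfe)
      exact Subtype.ext_iff.mp this
    exact Finset.disjoint_left.mp (hdisj _ _ hfne) hj1 hj2
  · have hTS : T ⊆ S := fun x hx => (Finset.mem_inter.mp (Finset.mem_sdiff.mp hx).1).1
    have heq : (∑ e ∈ S \ T, Matrix.vecMulVec (v e) (v e)) +
        α • (∑ e ∈ T, ∑ j, (if h : e ∈ T then q e h j else 0) • Matrix.vecMulVec (v j) (v j)) -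
        ∑ i ∈ S, Matrix.vecMulVec (v i) (v i) =
        ∑ e ∈ T, (α • (∑ j, (if h : e ∈ T then q e h j else 0) • Matrix.vecMulVec (v j) (v j)) -
          Matrix.vecMulVec (v e) (v e)) := by
      rw [← Finset.sum_sdiff hTS, Finset.smul_sum, Finset.sum_sub_distrib]
      abel
    rw [heq]
    refine Finset.sum_induction _ _ (fun a b ha hb => ha.add hb) Matrix.PosSemidef.zero ?_
    intro e he
    simpa only [dif_pos he] using hqPSD e he
end

section
/- Let k ≥ d, let s = k and let k_1 = … = k_k = 1 (so a feasible set picks exactly one point of each label). Let c be any coreset map on finite sets of labeled points in ℝ^d (with labels in {1,…,k}) satisfying |c(V)| ≤ k + d(d−1) − 1 for every input V. Then for every α ≥ 1, c is not an α-composable coreset for determinant maximization under this partition constraint: there exist finite input sets V_1, V_2 of labeled points in ℝ^d such that α·max{μ(S) : S ⊆ c(V_1)∪c(V_2), S feasible} < max{μ(S) : S ⊆ V_1∪V_2, S feasible}. -/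
open Finset
open scoped Classical

/-- A labeled point: an identifier (allowing distinct points with equal vectors),
a label in `{1,…,s}`, and a vector in `ℝ^d`. -/
abbrev LabeledPt (d s : ℕ) := ℕ × Fin s × (Fin d → ℝ)

/-- A set of labeled points is feasible for quotas `kk` if it contains exactly `kk i`
points with label `i`, for every `i`. -/
def FeasibleL (d s : ℕ) (kk : Fin s → ℕ) (S : Finset (LabeledPt d s)) : Prop :=
  ∀ i : Fin s, (S.filter fun p => p.2.1 = i).card = kk i

/-- The determinant objective `μ(S) = det(Σ_{(i,v)∈S} v vᵀ)` for labeled points. -/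
noncomputable def muL (d s : ℕ) (S : Finset (LabeledPt d s)) : ℝ :=
  (∑ p ∈ S, Matrix.vecMulVec p.2.2 p.2.2).det

/-! auxiliary constructions -/


def emb (d k : ℕ) (hdk : d ≤ k) (a : Fin d) : Fin k := ⟨a.1, lt_of_lt_of_le a.2 hdk⟩

lemma emb_inj (d k : ℕ) (hdk : d ≤ k) : Function.Injective (emb d k hdk) := by
  intro a b h
  have h2 : (emb d k hdk a).val = (emb d k hdk b).val := congrArg Fin.val h
  exact Fin.ext h2

def eV (d : ℕ) (b : Fin d) : Fin d → ℝ := Pi.single b 1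

lemma eV_apply (d : ℕ) (b c : Fin d) : eV d b c = if b = c then 1 else 0 := by
  by_cases h : b = c
  · subst h; simp [eV]
  · rw [if_neg h]
    exact Pi.single_eq_of_ne (fun hh => h hh.symm) 1

lemma eV_ne_zero (d : ℕ) (b : Fin d) : eV d b ≠ 0 := by
  intro h
  have := congrFun h b
  rw [eV_apply] at this
  simp at this

noncomputable def V1 (d k : ℕ) (hdk : d ≤ k) : Finset (LabeledPt d k) :=
  ((univ ×ˢ univ).image fun ab : Fin d × Fin d => ((0:ℕ), emb d k hdk ab.1, eV d ab.2))
  ∪ (univ.image fun ℓ : Fin k => ((0:ℕ), ℓ, (0 : Fin d → ℝ)))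

noncomputable def fV2 (d k : ℕ) (hdk : d ≤ k) (a₀ i₀ : Fin d) (R : ℝ) (a : Fin d) : LabeledPt d k :=
  ((1:ℕ), emb d k hdk a, R • eV d (Equiv.swap a₀ i₀ a))

noncomputable def V2 (d k : ℕ) (hdk : d ≤ k) (a₀ i₀ : Fin d) (R : ℝ) : Finset (LabeledPt d k) :=
  (univ.erase a₀).image (fV2 d k hdk a₀ i₀ R)

noncomputable def fS (d k : ℕ) (hdk : d ≤ k) (a₀ i₀ : Fin d) (R : ℝ) (ℓ : Fin k) : LabeledPt d k :=
  if h : (ℓ : ℕ) < d then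
    (if (⟨ℓ, h⟩ : Fin d) = a₀ then ((0:ℕ), ℓ, eV d i₀) else fV2 d k hdk a₀ i₀ R ⟨ℓ, h⟩)
  else ((0:ℕ), ℓ, (0 : Fin d → ℝ))

lemma fS_label (d k : ℕ) (hdk : d ≤ k) (a₀ i₀ : Fin d) (R : ℝ) (ℓ : Fin k) :
    (fS d k hdk a₀ i₀ R ℓ).2.1 = ℓ := by
  unfold fS fV2
  split_ifs with h h2
  · rfl
  · exact Fin.ext rfl
  · rfl

lemma label_filter_image {d s : ℕ} (f : Fin s → LabeledPt d s) (hf : ∀ i, (f i).2.1 = i)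
    (i : Fin s) : ((univ.image f).filter fun p => p.2.1 = i) = {f i} := by
  ext p
  simp only [mem_filter, mem_image, mem_univ, true_and, mem_singleton]
  constructor
  · rintro ⟨⟨j, rfl⟩, h2⟩
    rw [hf j] at h2
    rw [h2]
  · rintro rfl
    exact ⟨⟨i, rfl⟩, hf i⟩

lemma feasible_image {d s : ℕ} (f : Fin s → LabeledPt d s) (hf : ∀ i, (f i).2.1 = i) :
    FeasibleL d s (fun _ => 1) (univ.image f) := by
  intro i
  rw [label_filter_image f hf]
  simp

lemma inj_section {d s : ℕ} (f : Fin s → LabeledPt d s) (hf : ∀ i, (f i).2.1 = i) :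
    Function.Injective f := by
  intro i j h
  rw [← hf i, ← hf j, h]

lemma mu_diag (d s : ℕ) (T : Finset (LabeledPt d s))
    (h : ∀ p ∈ T, ∃ (j : Fin d) (m : ℝ), p.2.2 = m • eV d j) :
    muL d s T = ∏ c : Fin d, ∑ p ∈ T, (p.2.2 c)^2 := by
  unfold muL
  have hdiag : (∑ p ∈ T, Matrix.vecMulVec p.2.2 p.2.2)
      = Matrix.diagonal (fun c => ∑ p ∈ T, (p.2.2 c)^2) := by
    ext c c'
    rw [Matrix.sum_apply]
    by_cases hcc : c = c'
    · subst hcc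
      rw [Matrix.diagonal_apply_eq]
      refine Finset.sum_congr rfl fun p _ => ?_
      rw [Matrix.vecMulVec_apply, sq]
    · rw [Matrix.diagonal_apply_ne _ hcc]
      refine Finset.sum_eq_zero fun p hp => ?_
      obtain ⟨j, m, hm⟩ := h p hp
      rw [Matrix.vecMulVec_apply, hm]
      simp only [Pi.smul_apply, smul_eq_mul, eV_apply]
      by_cases h2 : j = c'
      · have h1 : ¬ j = c := fun h1 => hcc (h1 ▸ h2 : c = c')
        rw [if_neg h1, mul_zero, zero_mul]
      · rw [if_neg h2, mul_zero, mul_zero]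
  rw [hdiag, Matrix.det_diagonal]

lemma sum_erase_swap (d : ℕ) (a₀ i₀ : Fin d) (N : ℝ) (c : Fin d) :
    (∑ a ∈ univ.erase a₀, if Equiv.swap a₀ i₀ a = c then N else 0)
      = if c = i₀ then 0 else N := by
  have hcond : ∀ a : Fin d, (Equiv.swap a₀ i₀ a = c) = (a = Equiv.swap a₀ i₀ c) := by
    intro a
    apply propext
    constructor
    · rintro rfl; rw [Equiv.swap_apply_self]
    · rintro rfl; rw [Equiv.swap_apply_self]
  simp only [hcond]
  rw [Finset.sum_ite_eq' (univ.erase a₀) (Equiv.swap a₀ i₀ c) (fun _ => N)]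
  by_cases hc : c = i₀
  · subst hc
    rw [Equiv.swap_apply_right]
    simp
  · have : Equiv.swap a₀ i₀ c ∈ univ.erase a₀ := by
      rw [mem_erase]
      refine ⟨?_, mem_univ _⟩
      intro h
      have h2 := congrArg (Equiv.swap a₀ i₀) h
      rw [Equiv.swap_apply_self, Equiv.swap_apply_left] at h2
      exact hc h2
    rw [if_pos this, if_neg hc]

lemma core (d k : ℕ) (hd : 1 ≤ d) (hdk : d ≤ k) (C : Finset (LabeledPt d k))
    (hC : C ⊆ V1 d k hdk) (α : ℝ) (hα : 1 ≤ α) (a₀ i₀ : Fin d)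
    (hkey : ((0:ℕ), emb d k hdk a₀, eV d i₀) ∉ C ∨
      ∃ ℓ₀ : Fin k, d ≤ (ℓ₀:ℕ) ∧ ((0:ℕ), ℓ₀, (0 : Fin d → ℝ)) ∉ C) :
    ∃ V₂ S : Finset (LabeledPt d k),
      S ⊆ V1 d k hdk ∪ V₂ ∧ FeasibleL d k (fun _ => 1) S ∧ 0 < muL d k S ∧
      ∀ T ⊆ C ∪ V₂, FeasibleL d k (fun _ => 1) T → α * muL d k T < muL d k S := by
  have hk1 : (1:ℝ) ≤ (k:ℝ) := by exact_mod_cast le_trans hd hdk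
  have hα0 : (0:ℝ) < α := lt_of_lt_of_le one_pos hα
  set N : ℝ := α * (k:ℝ)^2 * 2^d + 2*(k:ℝ) with hNdef
  have h2d0 : (0:ℝ) < 2^d := by positivity
  have hN2k : 2*(k:ℝ) ≤ N := by
    have hpos : (0:ℝ) ≤ α * (k:ℝ)^2 * 2^d := by positivity
    rw [hNdef]
    linarith
  have hNk : (k:ℝ) ≤ N := by linarith
  have hN1 : (1:ℝ) ≤ N := by linarith
  have hN0 : (0:ℝ) < N := by linarith
  set R : ℝ := Real.sqrt N with hRdef
  have hR2 : R^2 = N := Real.sq_sqrt hN0.le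
  set W2 := V2 d k hdk a₀ i₀ R with hW2
  set SS := univ.image (fS d k hdk a₀ i₀ R) with hSS
  have hfl : ∀ ℓ : Fin k, (fS d k hdk a₀ i₀ R ℓ).2.1 = ℓ := fS_label d k hdk a₀ i₀ R
  have hSfeas : FeasibleL d k (fun _ => 1) SS := feasible_image _ hfl
  have hSsub : SS ⊆ V1 d k hdk ∪ W2 := by
    intro p hp
    obtain ⟨ℓ, -, rfl⟩ := mem_image.mp hp
    by_cases h : (ℓ:ℕ) < d
    · by_cases h2 : (⟨ℓ, h⟩ : Fin d) = a₀
      · apply mem_union_left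
        unfold V1
        apply mem_union_left
        refine mem_image.mpr ⟨((⟨ℓ, h⟩ : Fin d), i₀), mem_univ _, ?_⟩
        unfold fS
        rw [dif_pos h, if_pos h2]
        have h3 : emb d k hdk ⟨ℓ, h⟩ = ℓ := Fin.ext rfl
        rw [h3]
      · apply mem_union_right
        rw [hW2]
        unfold V2
        refine mem_image.mpr ⟨(⟨ℓ, h⟩ : Fin d), mem_erase.mpr ⟨h2, mem_univ _⟩, ?_⟩
        unfold fS
        rw [dif_pos h, if_neg h2]
    · apply mem_union_left
      unfold V1
      apply mem_union_right
      refine mem_image.mpr ⟨ℓ, mem_univ _, ?_⟩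
      unfold fS
      rw [dif_neg h]
  have hSax : ∀ p ∈ SS, ∃ (j : Fin d) (m : ℝ), p.2.2 = m • eV d j := by
    intro p hp
    obtain ⟨ℓ, -, rfl⟩ := mem_image.mp hp
    unfold fS fV2
    split_ifs with h h2
    · exact ⟨i₀, 1, (one_smul _ _).symm⟩
    · exact ⟨Equiv.swap a₀ i₀ ⟨ℓ, h⟩, R, rfl⟩
    · exact ⟨i₀, 0, (zero_smul _ _).symm⟩
  have hDS : ∀ c : Fin d, (∑ p ∈ SS, (p.2.2 c)^2) = if c = i₀ then 1 else N := by
    intro c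
    rw [hSS, Finset.sum_image (fun x _ y _ h => inj_section _ hfl h)]
    rw [← Finset.sum_filter_add_sum_filter_not univ (fun ℓ : Fin k => (ℓ:ℕ) < d)]
    have h2 : (∑ ℓ ∈ univ.filter (fun ℓ : Fin k => ¬ (ℓ:ℕ) < d),
        ((fS d k hdk a₀ i₀ R ℓ).2.2 c)^2) = 0 := by
      refine Finset.sum_eq_zero fun ℓ hℓ => ?_
      have hℓ' := (mem_filter.mp hℓ).2
      unfold fS
      rw [dif_neg hℓ']
      norm_num
    have hset : univ.filter (fun ℓ : Fin k => (ℓ:ℕ) < d) = univ.image (emb d k hdk) := by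
      ext ℓ
      simp only [mem_filter, mem_univ, true_and, mem_image]
      constructor
      · intro h
        exact ⟨⟨ℓ, h⟩, Fin.ext rfl⟩
      · rintro ⟨a, -, rfl⟩
        exact a.2
    rw [h2, add_zero, hset, Finset.sum_image (fun x _ y _ h => emb_inj d k hdk h)]
    have hfse : ∀ a : Fin d, ((fS d k hdk a₀ i₀ R (emb d k hdk a)).2.2 c)^2
        = if a = a₀ then (eV d i₀ c)^2 else (if Equiv.swap a₀ i₀ a = c then N else 0) := by
      intro a
      have hlt : ((emb d k hdk a : Fin k) : ℕ) < d := a.2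
      have hcast : (⟨(emb d k hdk a : Fin k), hlt⟩ : Fin d) = a := Fin.ext rfl
      unfold fS
      rw [dif_pos hlt, hcast]
      by_cases h2 : a = a₀
      · rw [if_pos h2, if_pos h2]
      · rw [if_neg h2, if_neg h2]
        unfold fV2
        simp only [Pi.smul_apply, smul_eq_mul, eV_apply]
        by_cases h3 : Equiv.swap a₀ i₀ a = c
        · rw [if_pos h3, if_pos h3, mul_one, hR2]
        · rw [if_neg h3, if_neg h3, mul_zero]
          ring
    rw [Finset.sum_congr rfl (fun a _ => hfse a)]
    rw [← Finset.add_sum_erase univ _ (mem_univ a₀), if_pos rfl]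
    have h4 : (∑ a ∈ univ.erase a₀,
        if a = a₀ then (eV d i₀ c)^2 else (if Equiv.swap a₀ i₀ a = c then N else 0))
        = ∑ a ∈ univ.erase a₀, (if Equiv.swap a₀ i₀ a = c then N else 0) := by
      refine Finset.sum_congr rfl fun a ha => ?_
      rw [if_neg (mem_erase.mp ha).1]
    rw [h4, sum_erase_swap d a₀ i₀ N c]
    by_cases h5 : c = i₀
    · subst h5
      rw [if_pos rfl, if_pos rfl, eV_apply, if_pos rfl]
      norm_num
    · rw [if_neg h5, if_neg h5, eV_apply, if_neg (fun h6 => h5 h6.symm)]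
      norm_num
  have hmuS : muL d k SS = N ^ ((univ.erase i₀).card) := by
    rw [mu_diag d k SS hSax]
    rw [Finset.prod_congr rfl (fun c _ => hDS c)]
    rw [← Finset.mul_prod_erase univ _ (mem_univ i₀), if_pos rfl, one_mul]
    rw [Finset.prod_congr rfl (fun c hc => if_neg (mem_erase.mp hc).1), Finset.prod_const]
  refine ⟨W2, SS, hSsub, hSfeas, by rw [hmuS]; exact pow_pos hN0 _, ?_⟩
  intro T hT hFT
  rcases hkey with hkeyL | ⟨ℓ₀, hℓd, hℓC⟩
  swap
  · exfalso
    have h1 := hFT ℓ₀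
    have h2 : (T.filter fun p => p.2.1 = ℓ₀).Nonempty := by
      rw [← Finset.card_pos, h1]
      norm_num
    obtain ⟨p, hp⟩ := h2
    obtain ⟨hpT, hpl⟩ := mem_filter.mp hp
    rcases mem_union.mp (hT hpT) with hpC | hpV2
    · rcases mem_union.mp (hC hpC) with h3 | h3
      · obtain ⟨ab, -, rfl⟩ := mem_image.mp h3
        have h5 : (ab.1 : ℕ) < d := ab.1.2
        have h6 := congrArg Fin.val hpl
        simp only [emb] at h6
        omega
      · obtain ⟨ℓ, -, rfl⟩ := mem_image.mp h3
        have h6 : ℓ = ℓ₀ := hpl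
        subst h6
        exact hℓC hpC
    · rw [hW2] at hpV2
      unfold V2 at hpV2
      obtain ⟨a, -, rfl⟩ := mem_image.mp hpV2
      have h5 : (a : ℕ) < d := a.2
      have h6 := congrArg Fin.val hpl
      simp only [fV2, emb] at h6
      omega
  -- main branch
  have hTsub : ∀ p ∈ T, p ∈ V1 d k hdk ∨ p ∈ W2 := fun p hp =>
    (mem_union.mp (hT hp)).imp (fun h => hC h) id
  have hTax : ∀ p ∈ T, ∃ (j : Fin d) (m : ℝ), p.2.2 = m • eV d j := by
    intro p hp
    rcases hTsub p hp with h | h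
    · rcases mem_union.mp h with h1 | h1
      · obtain ⟨ab, -, rfl⟩ := mem_image.mp h1
        exact ⟨ab.2, 1, (one_smul _ _).symm⟩
      · obtain ⟨ℓ, -, rfl⟩ := mem_image.mp h1
        exact ⟨i₀, 0, (zero_smul _ _).symm⟩
    · rw [hW2] at h
      unfold V2 at h
      obtain ⟨a, -, rfl⟩ := mem_image.mp h
      exact ⟨Equiv.swap a₀ i₀ a, R, rfl⟩
  rw [mu_diag d k T hTax, hmuS]
  have hTcard : T.card = k := by
    rw [Finset.card_eq_sum_card_fiberwise (f := fun p : LabeledPt d k => p.2.1)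
      (fun p _ => mem_univ p.2.1)]
    rw [Finset.sum_congr rfl (fun i _ => hFT i)]
    simp
  have hsmall : ∀ c : Fin d, (∑ p ∈ T.filter (fun p => p ∉ W2), (p.2.2 c)^2) ≤ (k:ℝ) := by
    intro c
    have hb : ∀ p ∈ T.filter (fun p => p ∉ W2), (p.2.2 c)^2 ≤ 1 := by
      intro p hp
      obtain ⟨hpT, hpn⟩ := mem_filter.mp hp
      rcases hTsub p hpT with h | h
      · rcases mem_union.mp h with h1 | h1
        · obtain ⟨ab, -, rfl⟩ := mem_image.mp h1
          show (eV d ab.2 c)^2 ≤ 1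
          rw [eV_apply]
          by_cases h2 : ab.2 = c
          · rw [if_pos h2]; norm_num
          · rw [if_neg h2]; norm_num
        · obtain ⟨ℓ, -, rfl⟩ := mem_image.mp h1
          norm_num
      · exact absurd h hpn
    calc (∑ p ∈ T.filter (fun p => p ∉ W2), (p.2.2 c)^2)
        ≤ ∑ _p ∈ T.filter (fun p => p ∉ W2), (1:ℝ) := Finset.sum_le_sum hb
      _ = ((T.filter (fun p => p ∉ W2)).card : ℝ) := by rw [Finset.sum_const]; simp
      _ ≤ (T.card : ℝ) := by exact_mod_cast Finset.card_filter_le _ _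
      _ = (k:ℝ) := by rw [hTcard]
  have hV2sum : ∀ c : Fin d, (∑ p ∈ W2, (p.2.2 c)^2) = if c = i₀ then 0 else N := by
    intro c
    rw [hW2]
    unfold V2
    rw [Finset.sum_image (fun x _ y _ hxy => emb_inj d k hdk
      (congrArg (fun p : LabeledPt d k => p.2.1) hxy))]
    have h1 : ∀ a ∈ univ.erase a₀, ((fV2 d k hdk a₀ i₀ R a).2.2 c)^2
        = if Equiv.swap a₀ i₀ a = c then N else 0 := by
      intro a _
      unfold fV2
      simp only [Pi.smul_apply, smul_eq_mul, eV_apply]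
      by_cases h : Equiv.swap a₀ i₀ a = c
      · rw [if_pos h, if_pos h, mul_one, hR2]
      · rw [if_neg h, if_neg h, mul_zero]
        ring
    rw [Finset.sum_congr rfl h1, sum_erase_swap d a₀ i₀ N c]
  have hhuge : ∀ c : Fin d, (∑ p ∈ T.filter (fun p => p ∈ W2), (p.2.2 c)^2)
      ≤ if c = i₀ then 0 else N := by
    intro c
    rw [← hV2sum c]
    apply Finset.sum_le_sum_of_subset_of_nonneg
    · intro p hp
      exact (mem_filter.mp hp).2
    · intro p _ _
      positivity
  have hsplit : ∀ c : Fin d, (∑ p ∈ T, (p.2.2 c)^2)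
      = (∑ p ∈ T.filter (fun p => p ∈ W2), (p.2.2 c)^2)
        + (∑ p ∈ T.filter (fun p => p ∉ W2), (p.2.2 c)^2) :=
    fun c => (Finset.sum_filter_add_sum_filter_not T _ _).symm
  have hDle : ∀ c : Fin d, (∑ p ∈ T, (p.2.2 c)^2) ≤ N + (k:ℝ) := by
    intro c
    rw [hsplit c]
    have h1 := hhuge c
    have h2 : (if c = i₀ then (0:ℝ) else N) ≤ N := by
      split <;> linarith
    linarith [hsmall c]
  have hD0 : ∀ c : Fin d, 0 ≤ (∑ p ∈ T, (p.2.2 c)^2) :=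
    fun c => Finset.sum_nonneg fun p _ => sq_nonneg _
  by_cases hq : ∃ p ∈ T, p.2.2 = eV d i₀
  · obtain ⟨q, hqT, hqv⟩ := hq
    have hqC : q ∈ C := by
      rcases mem_union.mp (hT hqT) with h | h
      · exact h
      · exfalso
        rw [hW2] at h
        unfold V2 at h
        obtain ⟨a, ha, rfl⟩ := mem_image.mp h
        have ha' := (mem_erase.mp ha).1
        have hne : ¬ Equiv.swap a₀ i₀ a = i₀ := fun h3 =>
          ha' ((Equiv.swap a₀ i₀).injective (h3.trans (Equiv.swap_apply_left a₀ i₀).symm))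
        have h2 : (R • eV d (Equiv.swap a₀ i₀ a)) i₀ = eV d i₀ i₀ := congrFun hqv i₀
        rw [Pi.smul_apply, smul_eq_mul, eV_apply, if_neg hne, eV_apply, if_pos rfl,
          mul_zero] at h2
        norm_num at h2
    obtain ⟨aq, hqeq⟩ : ∃ aq : Fin d, q = ((0:ℕ), emb d k hdk aq, eV d i₀) := by
      rcases mem_union.mp (hC hqC) with h1 | h1
      · obtain ⟨ab, -, rfl⟩ := mem_image.mp h1
        exact ⟨ab.1, by rw [← hqv]⟩
      · obtain ⟨ℓ, -, rfl⟩ := mem_image.mp h1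
        exfalso
        have h2 := congrFun hqv i₀
        rw [eV_apply, if_pos rfl] at h2
        norm_num at h2
    have haq : aq ≠ a₀ := by
      intro h
      rw [hqeq, h] at hqC
      exact hkeyL hqC
    have hhq : fV2 d k hdk a₀ i₀ R aq ∉ T := by
      intro hmem
      have huniq := Finset.card_le_one.mp (le_of_eq (hFT (emb d k hdk aq)))
      have h1 : fV2 d k hdk a₀ i₀ R aq ∈ T.filter (fun p => p.2.1 = emb d k hdk aq) :=
        mem_filter.mpr ⟨hmem, rfl⟩
      have h2 : q ∈ T.filter (fun p => p.2.1 = emb d k hdk aq) :=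
        mem_filter.mpr ⟨hqT, by rw [hqeq]⟩
      have h3 := huniq _ h1 _ h2
      rw [hqeq] at h3
      have h4 := congrArg Prod.fst h3
      unfold fV2 at h4
      norm_num at h4
    have hDsig : (∑ p ∈ T.filter (fun p => p ∈ W2), (p.2.2 (Equiv.swap a₀ i₀ aq))^2) = 0 := by
      refine Finset.sum_eq_zero fun p hp => ?_
      obtain ⟨hpT, hpW⟩ := mem_filter.mp hp
      rw [hW2] at hpW
      unfold V2 at hpW
      obtain ⟨a, -, rfl⟩ := mem_image.mp hpW
      unfold fV2
      simp only [Pi.smul_apply, smul_eq_mul, eV_apply]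
      have hne : ¬ Equiv.swap a₀ i₀ a = Equiv.swap a₀ i₀ aq := by
        intro h2
        have h3 : a = aq := (Equiv.swap a₀ i₀).injective h2
        subst h3
        exact hhq hpT
      rw [if_neg hne, mul_zero]
      ring
    have hDsig_le : (∑ p ∈ T, (p.2.2 (Equiv.swap a₀ i₀ aq))^2) ≤ (k:ℝ) := by
      rw [hsplit, hDsig, zero_add]
      exact hsmall _
    have hDi_le : (∑ p ∈ T, (p.2.2 i₀)^2) ≤ (k:ℝ) := by
      have h1 := hhuge i₀
      rw [if_pos rfl] at h1
      rw [hsplit]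
      linarith [hsmall i₀]
    have hne2 : Equiv.swap a₀ i₀ aq ≠ i₀ := fun h =>
      haq ((Equiv.swap a₀ i₀).injective (h.trans (Equiv.swap_apply_left a₀ i₀).symm))
    have hmem2 : Equiv.swap a₀ i₀ aq ∈ univ.erase i₀ := mem_erase.mpr ⟨hne2, mem_univ _⟩
    rw [← Finset.mul_prod_erase univ _ (mem_univ i₀)]
    rw [← Finset.mul_prod_erase _ _ hmem2]
    have hd2 : 2 ≤ d := by
      by_contra h
      push_neg at h
      have h1 := i₀.2
      have h2 := (Equiv.swap a₀ i₀ aq).2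
      exact hne2 (Fin.ext (by omega))
    have hcu : (univ.erase i₀).card = d - 1 := by
      rw [Finset.card_erase_of_mem (mem_univ i₀), Finset.card_univ, Fintype.card_fin]
    have hce : ((univ.erase i₀).erase (Equiv.swap a₀ i₀ aq)).card = d - 2 := by
      rw [Finset.card_erase_of_mem hmem2, hcu]
      omega
    set e := d - 2 with he
    have hecard : e + 1 = (univ.erase i₀).card := by
      rw [hcu]
      omega
    have hrest : (∏ c ∈ (univ.erase i₀).erase (Equiv.swap a₀ i₀ aq), (∑ p ∈ T, (p.2.2 c)^2))
        ≤ (N + k)^e := by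
      calc (∏ c ∈ (univ.erase i₀).erase (Equiv.swap a₀ i₀ aq), (∑ p ∈ T, (p.2.2 c)^2))
          ≤ ∏ _c ∈ (univ.erase i₀).erase (Equiv.swap a₀ i₀ aq), (N + (k:ℝ)) :=
            Finset.prod_le_prod (fun c _ => hD0 c) (fun c _ => hDle c)
        _ = (N + (k:ℝ))^e := by rw [Finset.prod_const, hce]
    have hDrest0 : 0 ≤ (∏ c ∈ (univ.erase i₀).erase (Equiv.swap a₀ i₀ aq), (∑ p ∈ T, (p.2.2 c)^2)) :=
      Finset.prod_nonneg (fun c _ => hD0 c)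
    have hk0 : (0:ℝ) ≤ (k:ℝ) := by linarith
    have hrest0 : (0:ℝ) ≤ (N + k)^e := by positivity
    have hchain : (∑ p ∈ T, (p.2.2 i₀)^2) * ((∑ p ∈ T, (p.2.2 (Equiv.swap a₀ i₀ aq))^2)
        * (∏ c ∈ (univ.erase i₀).erase (Equiv.swap a₀ i₀ aq), (∑ p ∈ T, (p.2.2 c)^2)))
        ≤ (k:ℝ) * ((k:ℝ) * (N + k)^e) := by
      apply mul_le_mul hDi_le ?_ ?_ hk0
      · exact mul_le_mul hDsig_le hrest hDrest0 hk0
      · exact mul_nonneg (hD0 _) hDrest0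
    have h2e : (2:ℝ)^e ≤ 2^d := by
      apply pow_le_pow_right₀ one_le_two
      omega
    have hNke : (N + (k:ℝ))^e ≤ 2^e * N^e := by
      calc (N + (k:ℝ))^e ≤ (2*N)^e := pow_le_pow_left₀ (by linarith) (by linarith) e
        _ = 2^e * N^e := mul_pow 2 N e
    have hNe0 : (0:ℝ) < N^e := pow_pos hN0 e
    have h2 : α * (k:ℝ)^2 * 2^e < N := by
      have h3 : α * (k:ℝ)^2 * 2^e ≤ α * (k:ℝ)^2 * 2^d := by
        apply mul_le_mul_of_nonneg_left h2e
        positivity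
      have h4 : (0:ℝ) < 2*(k:ℝ) := by linarith
      linarith
    have hfin : α * ((k:ℝ) * ((k:ℝ) * (N + k)^e)) < N^(e+1) := by
      have h5 : α * ((k:ℝ) * ((k:ℝ) * (N + k)^e)) ≤ (α * (k:ℝ)^2 * 2^e) * N^e := by
        have h6 : α * ((k:ℝ) * ((k:ℝ) * (N + k)^e)) = (α * (k:ℝ)^2) * (N+k)^e := by ring
        rw [h6]
        have h7 : (α * (k:ℝ)^2) * (N+k)^e ≤ (α * (k:ℝ)^2) * (2^e * N^e) := by
          apply mul_le_mul_of_nonneg_left hNke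
          positivity
        linarith [h7]
      calc α * ((k:ℝ) * ((k:ℝ) * (N + k)^e)) ≤ (α * (k:ℝ)^2 * 2^e) * N^e := h5
        _ < N * N^e := mul_lt_mul_of_pos_right h2 hNe0
        _ = N^(e+1) := by rw [pow_succ]; ring
    calc α * ((∑ p ∈ T, (p.2.2 i₀)^2) * ((∑ p ∈ T, (p.2.2 (Equiv.swap a₀ i₀ aq))^2)
        * (∏ c ∈ (univ.erase i₀).erase (Equiv.swap a₀ i₀ aq), (∑ p ∈ T, (p.2.2 c)^2))))
        ≤ α * ((k:ℝ) * ((k:ℝ) * (N + k)^e)) := by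
          apply mul_le_mul_of_nonneg_left hchain (le_of_lt hα0)
      _ < N^(e+1) := hfin
      _ = N^((univ.erase i₀).card) := by rw [hecard]
  · have hDzero : (∑ p ∈ T, (p.2.2 i₀)^2) = 0 := by
      refine Finset.sum_eq_zero fun p hp => ?_
      rcases hTsub p hp with h | h
      · rcases mem_union.mp h with h1 | h1
        · obtain ⟨ab, -, rfl⟩ := mem_image.mp h1
          have hne : ¬ ab.2 = i₀ := by
            intro h2
            exact hq ⟨_, hp, by rw [h2]⟩
          show (eV d ab.2 i₀)^2 = 0
          rw [eV_apply, if_neg hne]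
          norm_num
        · obtain ⟨ℓ, -, rfl⟩ := mem_image.mp h1
          norm_num
      · rw [hW2] at h
        unfold V2 at h
        obtain ⟨a, ha, rfl⟩ := mem_image.mp h
        unfold fV2
        simp only [Pi.smul_apply, smul_eq_mul, eV_apply]
        have hne : ¬ Equiv.swap a₀ i₀ a = i₀ := fun h3 =>
          (mem_erase.mp ha).1 ((Equiv.swap a₀ i₀).injective
            (h3.trans (Equiv.swap_apply_left a₀ i₀).symm))
        rw [if_neg hne, mul_zero]
        ring
    rw [Finset.prod_eq_zero (mem_univ i₀) hDzero, mul_zero]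
    exact pow_pos hN0 _

lemma eV_inj (d : ℕ) {b b' : Fin d} (h : eV d b = eV d b') : b = b' := by
  by_contra hne
  have h2 := congrFun h b
  rw [eV_apply, if_pos rfl, eV_apply, if_neg (fun hh => hne hh.symm)] at h2
  norm_num at h2


/-- for `k ≥ d`, `s = k` labels and all quotas equal to `1` (a feasible
set picks exactly one point of each label), any coreset map `c` with
`|c(V)| ≤ k + d(d−1) − 1` fails to be an `α`-composable coreset for determinant
maximization under this partition constraint, for every `α ≥ 1`: there are inputs
`V₁, V₂` and a feasible `S ⊆ V₁ ∪ V₂` of positive value beating `α` times the value of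
every feasible subset of `c(V₁) ∪ c(V₂)`. -/
theorem stmt17 (d k : ℕ) (hd : 1 ≤ d) (hdk : d ≤ k)
    (c : Finset (LabeledPt d k) → Finset (LabeledPt d k))
    (hc : ∀ V, c V ⊆ V)
    (hsize : ∀ V, (c V).card < k + d * (d - 1))
    (α : ℝ) (hα : 1 ≤ α) :
    ∃ V₁ V₂ S : Finset (LabeledPt d k),
      S ⊆ V₁ ∪ V₂ ∧ FeasibleL d k (fun _ => 1) S ∧ 0 < muL d k S ∧
      ∀ T ⊆ c V₁ ∪ c V₂, FeasibleL d k (fun _ => 1) T →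
        α * muL d k T < muL d k S := by
  by_cases hbr : (∀ a b : Fin d, ((0:ℕ), emb d k hdk a, eV d b) ∈ c (V1 d k hdk)) ∧
      (∀ ℓ : Fin k, d ≤ (ℓ:ℕ) → ((0:ℕ), ℓ, (0 : Fin d → ℝ)) ∈ c (V1 d k hdk))
  · exfalso
    obtain ⟨h1, h2⟩ := hbr
    have hg1inj : Function.Injective
        (fun ab : Fin d × Fin d => ((0:ℕ), emb d k hdk ab.1, eV d ab.2)) := by
      intro x y h
      have ha : emb d k hdk x.1 = emb d k hdk y.1 :=
        congrArg (fun p : LabeledPt d k => p.2.1) h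
      have hb : eV d x.2 = eV d y.2 := congrArg (fun p : LabeledPt d k => p.2.2) h
      exact Prod.ext (emb_inj d k hdk ha) (eV_inj d hb)
    have hg2inj : Function.Injective
        (fun ℓ : Fin k => ((0:ℕ), ℓ, (0 : Fin d → ℝ))) := by
      intro x y h
      exact congrArg (fun p : LabeledPt d k => p.2.1) h
    set F1 : Finset (LabeledPt d k) := (univ ×ˢ univ).image
      (fun ab : Fin d × Fin d => ((0:ℕ), emb d k hdk ab.1, eV d ab.2)) with hF1
    set F2 : Finset (LabeledPt d k) := (univ.filter (fun ℓ : Fin k => d ≤ (ℓ:ℕ))).image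
      (fun ℓ : Fin k => ((0:ℕ), ℓ, (0 : Fin d → ℝ))) with hF2
    have hsub : F1 ∪ F2 ⊆ c (V1 d k hdk) := by
      intro p hp
      rcases mem_union.mp hp with h | h
      · obtain ⟨ab, -, rfl⟩ := mem_image.mp h
        exact h1 ab.1 ab.2
      · obtain ⟨ℓ, hℓ, rfl⟩ := mem_image.mp h
        exact h2 ℓ (mem_filter.mp hℓ).2
    have hc1 : F1.card = d * d := by
      rw [hF1, Finset.card_image_of_injective _ hg1inj]
      simp
    have hcf : (univ.filter (fun ℓ : Fin k => d ≤ (ℓ:ℕ))).card = k - d := by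
      have htot := Finset.card_filter_add_card_filter_not
        (s := (univ : Finset (Fin k))) (p := fun ℓ : Fin k => d ≤ (ℓ:ℕ))
      have hset : univ.filter (fun ℓ : Fin k => ¬ d ≤ (ℓ:ℕ)) = univ.image (emb d k hdk) := by
        ext ℓ
        simp only [mem_filter, mem_univ, true_and, mem_image, not_le]
        constructor
        · intro h
          exact ⟨⟨ℓ, h⟩, Fin.ext rfl⟩
        · rintro ⟨a, -, rfl⟩
          exact a.2
      have hneg : (univ.filter (fun ℓ : Fin k => ¬ d ≤ (ℓ:ℕ))).card = d := by
        rw [hset, Finset.card_image_of_injective _ (emb_inj d k hdk), Finset.card_univ,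
          Fintype.card_fin]
      rw [hneg] at htot
      rw [Finset.card_univ, Fintype.card_fin] at htot
      omega
    have hc2 : F2.card = k - d := by
      rw [hF2, Finset.card_image_of_injective _ hg2inj, hcf]
    have hdisj : Disjoint F1 F2 := by
      rw [Finset.disjoint_left]
      intro p hp1 hp2
      rw [hF1] at hp1
      rw [hF2] at hp2
      obtain ⟨ab, -, rfl⟩ := mem_image.mp hp1
      obtain ⟨ℓ, -, heq⟩ := mem_image.mp hp2
      have h3 : (0 : Fin d → ℝ) = eV d ab.2 := congrArg (fun p : LabeledPt d k => p.2.2) heq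
      exact eV_ne_zero d ab.2 h3.symm
    have hcard := Finset.card_le_card hsub
    rw [Finset.card_union_of_disjoint hdisj, hc1, hc2] at hcard
    have hs := hsize (V1 d k hdk)
    have harith : d * d = d * (d - 1) + d := by
      obtain ⟨m, rfl⟩ : ∃ m, d = m + 1 := ⟨d - 1, by omega⟩
      have h9 : (m + 1) - 1 = m := rfl
      rw [h9]
      exact Nat.mul_succ (m+1) m
    have hkd : d + (k - d) = k := by omega
    linarith
  · rw [not_and_or] at hbr
    rcases hbr with h | h
    · push_neg at h
      obtain ⟨a, b, hab⟩ := h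
      obtain ⟨V₂, S, hs1, hs2, hs3, hs4⟩ :=
        core d k hd hdk (c (V1 d k hdk)) (hc _) α hα a b (Or.inl hab)
      refine ⟨V1 d k hdk, V₂, S, hs1, hs2, hs3, ?_⟩
      intro T hT hFT
      exact hs4 T (subset_trans hT (Finset.union_subset_union (subset_refl _) (hc V₂))) hFT
    · push_neg at h
      obtain ⟨ℓ₀, hℓ1, hℓ2⟩ := h
      obtain ⟨V₂, S, hs1, hs2, hs3, hs4⟩ :=
        core d k hd hdk (c (V1 d k hdk)) (hc _) α hα ⟨0, hd⟩ ⟨0, hd⟩ (Or.inr ⟨ℓ₀, hℓ1, hℓ2⟩)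
      refine ⟨V1 d k hdk, V₂, S, hs1, hs2, hs3, ?_⟩
      intro T hT hFT
      exact hs4 T (subset_trans hT (Finset.union_subset_union (subset_refl _) (hc V₂))) hFT
end
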